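/- arXiv:1910.05254 — 9 statements merged into one kernel-verified Lean document; each statement's English description precedes it below -/
import Mathlib

section
/- Let r,s ≥ 1. If G is a bipartite graph with bipartition (X,Y) such that |X|,|Y| ≥ rs+r−1, and G contains no induced subgraph isomorphic to the disjoint union of a star K_{1,r} and s isolated vertices, then either every vertex of G has degree less than r, or (fewer than s vertices of X have more than s−1 non-neighbours in Y, and fewer than s vertices of Y have more than s−1 non-neighbours in X). -/
open SimpleGraph

/-- `S` is an independent set of `G`. -/
def IsIS {V : Type*} (G : SimpleGraph V) (S : Set V) : Prop :=
  S.Pairwise fun u v => ¬ G.Adj u v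

/-- `G` contains no induced subgraph isomorphic to `H`. -/
def HFree {W V : Type*} (H : SimpleGraph W) (G : SimpleGraph V) : Prop :=
  IsEmpty (H ↪g G)

/-- `G` is bipartite: the vertex set splits into two independent sets. -/
def IsBip {V : Type*} (G : SimpleGraph V) : Prop :=
  ∃ X : Set V, IsIS G X ∧ IsIS G Xᶜ

/-- `S` is a vertex cover of `G`. -/
def IsVC {V : Type*} (G : SimpleGraph V) (S : Finset V) : Prop :=
  ∀ ⦃u v⦄, G.Adj u v → u ∈ S ∨ v ∈ S

/-- minimum size of a vertex cover. -/
noncomputable def vc {V : Type*} (G : SimpleGraph V) : ℕ :=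
  sInf {n | ∃ S : Finset V, IsVC G S ∧ S.card = n}

/-- minimum size of an independent vertex cover. -/
noncomputable def ivc {V : Type*} (G : SimpleGraph V) : ℕ :=
  sInf {n | ∃ S : Finset V, IsVC G S ∧ IsIS G ↑S ∧ S.card = n}

/-- The disjoint union `K_{1,r} + s·P_1`: a star with `r` leaves plus `s` isolated vertices. -/
def starPlus (r s : ℕ) : SimpleGraph (Unit ⊕ Fin r ⊕ Fin s) :=
  SimpleGraph.fromRel fun u v => ∃ i : Fin r, u = Sum.inl () ∧ v = Sum.inr (Sum.inl i)

/-!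
A vertex of degree at least `r` has at most `s - 1` non-neighbours on the other side: `r` of
its neighbours and `s` of those non-neighbours would span, with it, an induced `K_{1,r} + sP_1`.
Hence vertices with at least `s` non-neighbours have degree below `r`. If `s` of them lay on the
side `Y` of a vertex `v` of degree at least `r`, their neighbourhoods would cover at most
`s(r-1)` vertices of `X`, while `v` has at least `|X| - (s-1) ≥ s(r-1) + r` neighbours; `r` of
the uncovered ones, `v` and those `s` vertices span a `K_{1,r} + sP_1`. If `s` of them lay in
`X`, at least `|Y| - s(r-1) ≥ s` vertices of `Y` would miss all of them, and so would each have
at least `s` non-neighbours, which was just excluded.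
-/

section StarPlusFree

variable {V : Type*} {G : SimpleGraph V}

open Finset

theorem IsIS.not_adj {S : Set V} (hS : IsIS G S) {x y : V} (hx : x ∈ S) (hy : y ∈ S) :
    ¬ G.Adj x y :=
  fun h => hS hx hy h.ne h

theorem not_hFree_starPlus [DecidableEq V] {r s : ℕ} {c : V} {L T : Finset V}
    (hL : r ≤ #L) (hT : s ≤ #T) (hcL : ∀ x ∈ L, G.Adj c x) (hcT : ∀ x ∈ T, ¬ G.Adj c x)
    (hc : c ∉ T) (hLT : IsIS G ↑(L ∪ T)) :
    ¬ HFree (starPlus r s) G := by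
  obtain ⟨f⟩ : Nonempty (Fin r ↪ L) :=
    Function.Embedding.nonempty_of_card_le (by simpa using hL)
  obtain ⟨g⟩ : Nonempty (Fin s ↪ T) :=
    Function.Embedding.nonempty_of_card_le (by simpa using hT)
  have hnonadj : ∀ x ∈ L ∪ T, ∀ y ∈ L ∪ T, ¬ G.Adj x y := fun x hx y hy =>
    hLT.not_adj (mem_coe.2 hx) (mem_coe.2 hy)
  have hfg : ∀ i j, (f i : V) ≠ g j := fun i j h => hcT _ (g j).2 (h ▸ hcL _ (f i).2)
  have hinj : Function.Injective (Sum.elim (fun _ : Unit => c)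
      (Sum.elim (fun i => (f i : V)) (fun j => (g j : V)))) := by
    refine Function.Injective.sumElim (fun _ _ _ => rfl)
      (Function.Injective.sumElim (Subtype.val_injective.comp f.injective)
        (Subtype.val_injective.comp g.injective) hfg) ?_
    rintro _ (i | j) h
    · exact (hcL _ (f i).2).ne h
    · exact hc (h ▸ (g j).2)
  rw [HFree, not_isEmpty_iff]
  refine ⟨⟨⟨_, hinj⟩, ?_⟩⟩
  rintro (⟨⟩ | i | i) (⟨⟩ | j | j) <;>
    simp [starPlus, G.adj_comm _ c, hcL _ (f _).2, hcT _ (g _).2, hnonadj]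

section Bipartite

variable [Fintype V] [DecidableEq V]

structure IsBipartition (G : SimpleGraph V) (X Y : Finset V) : Prop where
  disjoint : Disjoint X Y
  union_eq : X ∪ Y = univ
  isIS_left : IsIS G ↑X
  isIS_right : IsIS G ↑Y

theorem IsBipartition.symm {X Y : Finset V} (hB : IsBipartition G X Y) : IsBipartition G Y X :=
  ⟨hB.disjoint.symm, union_comm Y X ▸ hB.union_eq, hB.isIS_right, hB.isIS_left⟩

variable [DecidableRel G.Adj]

theorem card_biUnion_neighborFinset_le {S : Finset V} {d : ℕ}
    (h : ∀ a ∈ S, G.degree a ≤ d) :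
    #(S.biUnion fun a => G.neighborFinset a) ≤ #S * d :=
  card_biUnion_le_card_mul _ _ _ fun a ha =>
    (card_neighborFinset_eq_degree G a).trans_le (h a ha)

def manyNonAdj (G : SimpleGraph V) [DecidableRel G.Adj] (s : ℕ) (Q P : Finset V) : Finset V :=
  {u ∈ Q | s - 1 < #{x ∈ P | ¬ G.Adj u x}}

namespace IsBipartition

variable {X Y : Finset V} {r s : ℕ} {u : V}

theorem neighborFinset_subset (hB : IsBipartition G X Y) (hu : u ∈ Y) :
    G.neighborFinset u ⊆ X := by
  intro x hx
  have hadj := (G.mem_neighborFinset u x).1 hx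
  refine (mem_union.1 (hB.union_eq ▸ mem_univ x)).resolve_right fun hxY => ?_
  exact hB.isIS_right.not_adj (mem_coe.2 hu) (mem_coe.2 hxY) hadj

theorem degree_add_card_nonAdj (hB : IsBipartition G X Y) (hu : u ∈ Y) :
    G.degree u + #{x ∈ X | ¬ G.Adj u x} = #X := by
  have hN : {x ∈ X | G.Adj u x} = G.neighborFinset u := by
    ext x
    simp only [mem_filter, mem_neighborFinset, and_iff_right_iff_imp]
    exact fun hx => hB.neighborFinset_subset hu ((G.mem_neighborFinset u x).2 hx)
  rw [← card_filter_add_card_filter_not (s := X) (G.Adj u), hN, card_neighborFinset_eq_degree]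

theorem card_nonAdj_lt (hB : IsBipartition G X Y) (hfree : HFree (starPlus r s) G)
    (hu : u ∈ Y) (hdeg : r ≤ G.degree u) : #{x ∈ X | ¬ G.Adj u x} < s := by
  by_contra! hs
  refine not_hFree_starPlus hdeg hs (fun x hx => (G.mem_neighborFinset u x).1 hx)
    (fun x hx => (mem_filter.1 hx).2)
    (fun huX => disjoint_left.1 hB.disjoint (mem_filter.1 huX).1 hu) ?_ hfree
  refine hB.isIS_left.mono (coe_subset.2 (union_subset (hB.neighborFinset_subset hu) ?_))
  exact filter_subset _ _

theorem degree_lt_of_mem_manyNonAdj (hB : IsBipartition G X Y) (hfree : HFree (starPlus r s) G)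
    (hu : u ∈ manyNonAdj G s Y X) : G.degree u < r := by
  obtain ⟨huY, hmany⟩ := mem_filter.1 hu
  by_contra! hdeg
  have := hB.card_nonAdj_lt hfree huY hdeg
  omega

theorem card_manyNonAdj_lt (hB : IsBipartition G X Y) (hfree : HFree (starPlus r s) G)
    (hXcard : r * s + r - 1 ≤ #X) {v : V} (hv : v ∈ Y) (hdeg : r ≤ G.degree v) :
    #(manyNonAdj G s Y X) < s := by
  by_contra! hmany
  obtain ⟨T, hTsub, hTcard⟩ := exists_subset_card_eq hmany
  have hTdeg : ∀ t ∈ T, G.degree t < r := fun t ht =>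
    hB.degree_lt_of_mem_manyNonAdj hfree (hTsub ht)
  have hTY : T ⊆ Y := hTsub.trans (filter_subset _ _)
  set W := T.biUnion (fun t => G.neighborFinset t)
  have hW : #W ≤ s * (r - 1) := hTcard ▸ card_biUnion_neighborFinset_le fun t ht =>
    Nat.le_sub_one_of_lt (hTdeg t ht)
  have hL : r ≤ #(G.neighborFinset v \ W) := by
    have hvnonAdj := hB.card_nonAdj_lt hfree hv hdeg
    have hvdeg := hB.degree_add_card_nonAdj hv
    have hsdiff := le_card_sdiff W (G.neighborFinset v)
    rw [card_neighborFinset_eq_degree] at hsdiff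
    have hsr : s * (r - 1) = r * s - s := by rw [Nat.mul_sub_one, mul_comm]
    omega
  refine not_hFree_starPlus hL hTcard.ge
    (fun x hx => (G.mem_neighborFinset v x).1 (mem_sdiff.1 hx).1)
    (fun t ht => hB.isIS_right.not_adj (mem_coe.2 hv) (mem_coe.2 (hTY ht)))
    (fun hvT => (hTdeg v hvT).not_ge hdeg) ?_ hfree
  rw [coe_union, IsIS, Set.pairwise_union]
  refine ⟨hB.isIS_left.mono (coe_subset.2 (sdiff_subset.trans (hB.neighborFinset_subset hv))),
    hB.isIS_right.mono (coe_subset.2 hTY), fun x hx t ht _ => ?_⟩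
  have hxW : x ∉ W := (mem_sdiff.1 hx).2
  have htx : ¬ G.Adj t x := fun h =>
    hxW (mem_biUnion.2 ⟨t, ht, (G.mem_neighborFinset t x).2 h⟩)
  exact ⟨fun h => htx h.symm, htx⟩

theorem card_manyNonAdj_lt_of_card_manyNonAdj_lt (hB : IsBipartition G X Y)
    (hfree : HFree (starPlus r s) G) (hYcard : r * s + r - 1 ≤ #Y)
    (hY : #(manyNonAdj G s Y X) < s) : #(manyNonAdj G s X Y) < s := by
  by_contra! hmany
  obtain ⟨S, hSsub, hScard⟩ := exists_subset_card_eq hmany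
  have hSdeg : ∀ a ∈ S, G.degree a < r := fun a ha =>
    hB.symm.degree_lt_of_mem_manyNonAdj hfree (hSsub ha)
  obtain ⟨a, ha⟩ : S.Nonempty := card_pos.1 (hScard ▸ hY.pos)
  have hr : 0 < r := (hSdeg a ha).pos
  set C := Y \ S.biUnion fun a => G.neighborFinset a
  have hC : s ≤ #C := by
    have hW : #(S.biUnion fun a => G.neighborFinset a) ≤ s * (r - 1) :=
      hScard ▸ card_biUnion_neighborFinset_le fun a ha => Nat.le_sub_one_of_lt (hSdeg a ha)
    have hsdiff : #Y - #(S.biUnion fun a => G.neighborFinset a) ≤ #C := le_card_sdiff _ _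
    have hsr : s * (r - 1) + s = r * s := by
      rw [Nat.mul_sub_one, mul_comm, Nat.sub_add_cancel (Nat.le_mul_of_pos_left s hr)]
    omega
  have hCsub : C ⊆ manyNonAdj G s Y X := by
    intro y hy
    obtain ⟨hyY, hyS⟩ := mem_sdiff.1 hy
    have hSnonAdj : S ⊆ {x ∈ X | ¬ G.Adj y x} := fun a ha => mem_filter.2
      ⟨(mem_filter.1 (hSsub ha)).1,
        fun h => hyS (mem_biUnion.2 ⟨a, ha, (G.mem_neighborFinset a y).2 h.symm⟩)⟩
    have := card_le_card hSnonAdj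
    exact mem_filter.2 ⟨hyY, by omega⟩
  have := card_le_card hCsub
  omega

end IsBipartition

end Bipartite

end StarPlusFree

theorem stmt_0_general {V : Type*} [Fintype V] [DecidableEq V] (G : SimpleGraph V)
    [DecidableRel G.Adj] (r s : ℕ)
    (X Y : Finset V) (hdisj : Disjoint X Y) (hunion : X ∪ Y = Finset.univ)
    (hX : IsIS G ↑X) (hY : IsIS G ↑Y)
    (hXcard : r * s + r - 1 ≤ X.card) (hYcard : r * s + r - 1 ≤ Y.card)
    (hfree : HFree (starPlus r s) G) :
    (∀ v : V, G.degree v < r) ∨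
      (((X.filter fun x => s - 1 < (Y.filter fun y => ¬ G.Adj x y).card).card < s) ∧
       ((Y.filter fun y => s - 1 < (X.filter fun x => ¬ G.Adj y x).card).card < s)) := by
  refine or_iff_not_imp_left.2 fun hdeg => ?_
  simp only [not_forall, not_lt] at hdeg
  obtain ⟨v, hv⟩ := hdeg
  have hB : IsBipartition G X Y := ⟨hdisj, hunion, hX, hY⟩
  rcases Finset.mem_union.1 (hunion ▸ Finset.mem_univ v) with hvX | hvY
  · have hXmany := hB.symm.card_manyNonAdj_lt hfree hYcard hvX hv
    exact ⟨hXmany, hB.symm.card_manyNonAdj_lt_of_card_manyNonAdj_lt hfree hXcard hXmany⟩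
  · have hYmany := hB.card_manyNonAdj_lt hfree hXcard hvY hv
    exact ⟨hB.card_manyNonAdj_lt_of_card_manyNonAdj_lt hfree hYcard hYmany, hYmany⟩

theorem stmt_0 {V : Type*} [Fintype V] [DecidableEq V] (G : SimpleGraph V)
    [DecidableRel G.Adj] (r s : ℕ) (hr : 1 ≤ r) (hs : 1 ≤ s)
    (X Y : Finset V) (hdisj : Disjoint X Y) (hunion : X ∪ Y = Finset.univ)
    (hX : IsIS G ↑X) (hY : IsIS G ↑Y)
    (hXcard : r * s + r - 1 ≤ X.card) (hYcard : r * s + r - 1 ≤ Y.card)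
    (hfree : HFree (starPlus r s) G) :
    (∀ v : V, G.degree v < r) ∨
      (((X.filter fun x => s - 1 < (Y.filter fun y => ¬ G.Adj x y).card).card < s) ∧
       ((Y.filter fun y => s - 1 < (X.filter fun x => ¬ G.Adj y x).card).card < s)) :=
  stmt_0_general G r s X Y hdisj hunion hX hY hXcard hYcard hfree
end

section
/- Let r,s ≥ 1. If G is a bipartite graph containing no induced subgraph isomorphic to the disjoint union of K_{1,r} and s isolated vertices, then the minimum size of an independent vertex cover of G is at most r·vc(G) + rs, where vc(G) is the minimum size of a vertex cover of G. -/
open SimpleGraph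

theorem stmt_1 {V : Type*} [Fintype V] (G : SimpleGraph V) (r s : ℕ)
    (hr : 1 ≤ r) (hs : 1 ≤ s) (hbip : IsBip G)
    (hfree : HFree (starPlus r s) G) :
    ivc G ≤ r * vc G + r * s := by
  classical
  obtain ⟨X, hX, hXc⟩ := hbip
  have hne : {n | ∃ S : Finset V, IsVC G S ∧ S.card = n}.Nonempty :=
    ⟨Finset.univ.card, Finset.univ, fun u v _ => Or.inl (Finset.mem_univ u), rfl⟩
  obtain ⟨C, hC, hCcard⟩ : ∃ S : Finset V, IsVC G S ∧ S.card = vc G := Nat.sInf_mem hne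
  have cross : ∀ {u v : V}, G.Adj u v → u ∈ X → v ∉ X := by
    intro u v huv hu hv
    exact hX hu hv huv.ne huv
  have cross' : ∀ {u v : V}, G.Adj u v → u ∉ X → v ∈ X := by
    intro u v huv hu
    by_contra hv
    exact hXc hu hv huv.ne huv
  have ivc_le : ∀ S : Finset V, IsVC G S → IsIS G ↑S → ivc G ≤ S.card :=
    fun S h1 h2 => Nat.sInf_le ⟨S, h1, h2, rfl⟩
  set nb : V → Finset V := fun y => Finset.univ.filter (fun x => G.Adj y x ∧ x ∉ C) with hnb
  by_cases hcase : ∃ y, y ∉ X ∧ r ≤ (nb y).card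
  · -- Case 2
    obtain ⟨y, hyX, hyr⟩ := hcase
    set Dc : Finset V := Finset.univ.filter (fun v => v ∉ X ∧ v ∉ C ∧ v ≠ y) with hDcdef
    have hDc : Dc.card < s := by
      by_contra hle
      push_neg at hle
      obtain ⟨L, hLsub, hLr⟩ := Finset.exists_subset_card_eq hyr
      obtain ⟨P, hPsub, hPs⟩ := Finset.exists_subset_card_eq hle
      -- enumerate L and P
      let l : Fin r → V := fun i => (L.equivFin.symm (Fin.cast hLr.symm i) : V)
      let p : Fin s → V := fun j => (P.equivFin.symm (Fin.cast hPs.symm j) : V)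
      have hlL : ∀ i, l i ∈ L := fun i => (L.equivFin.symm (Fin.cast hLr.symm i)).2
      have hpP : ∀ j, p j ∈ P := fun j => (P.equivFin.symm (Fin.cast hPs.symm j)).2
      have hlinj : ∀ i j, l i = l j → i = j := by
        intro i j hij
        have h2 : (Fin.cast hLr.symm i) = (Fin.cast hLr.symm j) :=
          L.equivFin.symm.injective (Subtype.ext hij)
        simpa [Fin.ext_iff] using congrArg Fin.val h2
      have hpinj : ∀ i j, p i = p j → i = j := by
        intro i j hij
        have h2 : (Fin.cast hPs.symm i) = (Fin.cast hPs.symm j) :=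
          P.equivFin.symm.injective (Subtype.ext hij)
        simpa [Fin.ext_iff] using congrArg Fin.val h2
      have hly : ∀ i, G.Adj y (l i) := by
        intro i
        have := hLsub (hlL i)
        rw [hnb] at this
        simp only [Finset.mem_filter] at this
        exact this.2.1
      have hlC : ∀ i, l i ∉ C := by
        intro i
        have := hLsub (hlL i)
        rw [hnb] at this
        simp only [Finset.mem_filter] at this
        exact this.2.2
      have hlX : ∀ i, l i ∈ X := fun i => cross' (hly i) hyX
      have hpX : ∀ j, p j ∉ X := by
        intro j
        have := hPsub (hpP j); rw [hDcdef] at this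
        simp only [Finset.mem_filter] at this
        exact this.2.1
      have hpC : ∀ j, p j ∉ C := by
        intro j
        have := hPsub (hpP j); rw [hDcdef] at this
        simp only [Finset.mem_filter] at this
        exact this.2.2.1
      have hpy : ∀ j, p j ≠ y := by
        intro j
        have := hPsub (hpP j); rw [hDcdef] at this
        simp only [Finset.mem_filter] at this
        exact this.2.2.2
      -- the embedding
      let f : Unit ⊕ Fin r ⊕ Fin s → V := Sum.elim (fun _ => y) (Sum.elim l p)
      have hinj : Function.Injective f := by
        rintro (⟨⟩ | i | j) (⟨⟩ | i' | j') h <;> simp only [f, Sum.elim_inl, Sum.elim_inr] at h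
        · rfl
        · exact absurd h.symm (hly i').ne'
        · exact absurd h.symm (hpy j')
        · exact absurd h (hly i).ne'
        · exact congrArg _ (congrArg _ (hlinj _ _ h))
        · exact absurd (h ▸ hlX i) (hpX j')
        · exact absurd h (hpy j)
        · exact absurd (h ▸ hpX j) (fun hh => hh (hlX i'))
        · exact congrArg _ (congrArg _ (hpinj _ _ h))
      have hmap : ∀ a b, G.Adj (f a) (f b) ↔ (starPlus r s).Adj a b := by
        have nadjX : ∀ {u v : V}, u ∈ X → v ∈ X → ¬ G.Adj u v :=
          fun hu hv h => cross h hu hv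
        have nadjY : ∀ {u v : V}, u ∉ X → v ∉ X → ¬ G.Adj u v :=
          fun hu hv h => hXc hu hv h.ne h
        have nadjC : ∀ {u v : V}, u ∉ C → v ∉ C → ¬ G.Adj u v := by
          intro u v hu hv h
          rcases hC h with h1 | h1 <;> [exact hu h1; exact hv h1]
        rintro (⟨⟩ | i | j) (⟨⟩ | i' | j') <;>
          simp only [f, Sum.elim_inl, Sum.elim_inr]
        · exact iff_of_false (G.irrefl) (by simp [starPlus, SimpleGraph.fromRel_adj])
        · exact iff_of_true (hly i') (by simp [starPlus, SimpleGraph.fromRel_adj])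
        · exact iff_of_false (nadjY hyX (hpX j'))
            (by simp [starPlus, SimpleGraph.fromRel_adj])
        · exact iff_of_true ((hly i).symm) (by simp [starPlus, SimpleGraph.fromRel_adj])
        · exact iff_of_false (nadjX (hlX i) (hlX i'))
            (by simp [starPlus, SimpleGraph.fromRel_adj])
        · exact iff_of_false (nadjC (hlC i) (hpC j'))
            (by simp [starPlus, SimpleGraph.fromRel_adj])
        · exact iff_of_false (nadjY (hpX j) hyX)
            (by simp [starPlus, SimpleGraph.fromRel_adj])
        · exact iff_of_false (nadjC (hpC j) (hlC i'))
            (by simp [starPlus, SimpleGraph.fromRel_adj])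
        · exact iff_of_false (nadjY (hpX j) (hpX j'))
            (by simp [starPlus, SimpleGraph.fromRel_adj])
      exact hfree.false ⟨⟨f, hinj⟩, hmap _ _⟩
    -- now Xᶜ is a small independent vertex cover
    set S : Finset V := Finset.univ.filter (fun v => v ∉ X) with hSdef
    have hSvc : IsVC G S := by
      intro u v huv
      by_cases hu : u ∈ X
      · exact Or.inr (by simp [hSdef, cross huv hu])
      · exact Or.inl (by simp [hSdef, hu])
    have hSis : IsIS G ↑S := by
      intro u hu v hv hne' hadj
      simp only [hSdef, Finset.coe_filter, Set.mem_setOf_eq, Finset.mem_univ, true_and] at hu hv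
      exact hXc hu hv hne' hadj
    have hsub : S ⊆ C ∪ insert y Dc := by
      intro v hv
      simp only [hSdef, Finset.mem_filter, Finset.mem_univ, true_and] at hv
      by_cases h1 : v ∈ C
      · exact Finset.mem_union_left _ h1
      · by_cases h2 : v = y
        · exact Finset.mem_union_right _ (by simp [h2])
        · exact Finset.mem_union_right _ (Finset.mem_insert_of_mem (by simp [hDcdef, hv, h1, h2]))
    have hScard : S.card ≤ vc G + s := by
      calc S.card ≤ (C ∪ insert y Dc).card := Finset.card_le_card hsub
        _ ≤ C.card + (insert y Dc).card := Finset.card_union_le _ _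
        _ ≤ C.card + (Dc.card + 1) := by
            exact Nat.add_le_add_left (Finset.card_insert_le _ _) _
        _ ≤ vc G + s := by omega
    calc ivc G ≤ S.card := ivc_le S hSvc hSis
      _ ≤ vc G + s := hScard
      _ ≤ r * vc G + r * s := by
          have h1 : vc G ≤ r * vc G := Nat.le_mul_of_pos_left _ hr
          have h2 : s ≤ r * s := Nat.le_mul_of_pos_left _ hr
          omega
  · -- Case 1
    push_neg at hcase
    set A : Finset V := C.filter (· ∈ X) with hAdef
    set B : Finset V := C.filter (fun v => ¬ v ∈ X) with hBdef
    have hAB : A.card + B.card = C.card :=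
      Finset.card_filter_add_card_filter_not _
    set S : Finset V := A ∪ B.biUnion nb with hSdef
    have key : ∀ u v, G.Adj u v → u ∈ X → u ∈ S := by
      intro u v huv hu
      by_cases h1 : u ∈ C
      · exact Finset.mem_union_left _ (by simp [hAdef, h1, hu])
      · have hv : v ∈ C := (hC huv).resolve_left h1
        have hvX : v ∉ X := cross huv hu
        refine Finset.mem_union_right _ (Finset.mem_biUnion.2 ⟨v, by simp [hBdef, hv, hvX], ?_⟩)
        simp [hnb, huv.symm, h1]
    have hSvc : IsVC G S := by
      intro u v huv
      by_cases hu : u ∈ X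
      · exact Or.inl (key u v huv hu)
      · exact Or.inr (key v u huv.symm (cross' huv hu))
    have hSX : ∀ v ∈ S, v ∈ X := by
      intro v hv
      rcases Finset.mem_union.1 hv with h | h
      · exact (Finset.mem_filter.1 h).2
      · obtain ⟨b, hb, hvb⟩ := Finset.mem_biUnion.1 h
        have hbX : b ∉ X := (Finset.mem_filter.1 hb).2
        have : G.Adj b v ∧ v ∉ C := by simpa [hnb] using hvb
        exact cross' this.1 hbX
    have hSis : IsIS G ↑S := by
      intro u hu v hv hne' hadj
      exact hX (hSX u hu) (hSX v hv) hne' hadj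
    have hScard : S.card ≤ r * vc G := by
      have h1 : S.card ≤ A.card + ∑ b ∈ B, (nb b).card :=
        le_trans (Finset.card_union_le _ _)
          (Nat.add_le_add_left (Finset.card_biUnion_le) _)
      have h2 : ∑ b ∈ B, (nb b).card ≤ B.card * (r - 1) := by
        have hbd : ∀ b ∈ B, (nb b).card ≤ r - 1 := by
          intro b hb
          have := hcase b (Finset.mem_filter.1 hb).2
          omega
        calc ∑ b ∈ B, (nb b).card ≤ ∑ _b ∈ B, (r - 1) := Finset.sum_le_sum hbd
          _ = B.card * (r - 1) := by rw [Finset.sum_const, smul_eq_mul]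
      have h3 : A.card ≤ r * A.card := Nat.le_mul_of_pos_left _ hr
      have h4 : B.card * (r - 1) ≤ B.card * r := Nat.mul_le_mul_left _ (Nat.sub_le r 1)
      calc S.card ≤ A.card + B.card * (r - 1) := by omega
        _ ≤ r * A.card + r * B.card := by
            have := Nat.mul_comm B.card r
            omega
        _ = r * C.card := by rw [← Nat.mul_add, hAB]
        _ = r * vc G := by rw [hCcard]
    calc ivc G ≤ S.card := ivc_le S hSvc hSis
      _ ≤ r * vc G := hScard
      _ ≤ r * vc G + r * s := Nat.le_add_right _ _
end

section
/- Let r ≥ 2. If G is a bipartite graph containing no induced subgraph isomorphic to K_{1,r}^+ (the star K_{1,r} with one edge subdivided), then ivc(G) ≤ (r−1)·vc(G)². -/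
open SimpleGraph

/-- `K_{1,r}^+`: the star `K_{1,r}` with one edge subdivided.
Vertex `Sum.inl 0` is the centre, `Sum.inl 1` the subdivision vertex,
`Sum.inl 2` the far endpoint, and `Sum.inr i` the remaining `r - 1` leaves. -/
def starSubdiv (r : ℕ) : SimpleGraph (Fin 3 ⊕ Fin (r - 1)) :=
  SimpleGraph.fromRel fun u v =>
    (u = Sum.inl 0 ∧ v = Sum.inl 1) ∨ (u = Sum.inl 1 ∧ v = Sum.inl 2) ∨
      (∃ i : Fin (r - 1), u = Sum.inl 0 ∧ v = Sum.inr i)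

/-!
Fix a bipartition `X, Xᶜ` and a minimum vertex cover `C`, and look at one component, containing
`k` vertices of `C`. If some `a ∈ C ∩ X` has a neighbour outside `C`, walk from any `b ∈ C \ X`
to `a` along a path, which has length `< 2k` because `C` covers it. Every two steps of the walk
lose fewer than `r - 1` of the neighbours of `b` outside `C`, since otherwise they would be the
leaves of an induced `K_{1,r}^+`; hence `b` has fewer than `(r - 1) k` of them, and the side `X`
of the component has at most `(r - 1) k²` vertices. If no such `a` exists, the side `Xᶜ` lies
in `C`. The non-isolated vertices of the small side of every component form an independent
vertex cover of size at most `(r - 1) ∑ k² ≤ (r - 1) vc(G)²`.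
-/

open Finset

section

variable {V : Type*} {G : SimpleGraph V}

theorem IsIS.not_adj_s2 {S : Set V} (hS : IsIS G S) {u v : V} (hu : u ∈ S) (hv : v ∈ S) :
    ¬ G.Adj u v :=
  fun h => hS hu hv h.ne h

theorem IsIS.notMem_of_adj {S : Set V} (hS : IsIS G S) {u v : V} (h : G.Adj u v) (hu : u ∈ S) :
    v ∉ S :=
  fun hv => hS.not_adj_s2 hu hv h

theorem IsIS.mem_of_adj {S : Set V} (hSc : IsIS G Sᶜ) {u v : V} (h : G.Adj u v) (hu : u ∉ S) :
    v ∈ S :=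
  not_not.mp (hSc.notMem_of_adj h hu)

theorem exists_isVC_card_eq_vc [Fintype V] (G : SimpleGraph V) :
    ∃ C : Finset V, IsVC G C ∧ #C = vc G :=
  Nat.sInf_mem (s := {n | ∃ C : Finset V, IsVC G C ∧ #C = n})
    ⟨_, univ, fun u _ _ => Or.inl (mem_univ u), rfl⟩

theorem not_hFree_starSubdiv {r : ℕ} {x₀ x₁ x₂ : V}
    (l : Fin (r - 1) ↪ V) (h₀₁ : G.Adj x₀ x₁) (h₁₂ : G.Adj x₁ x₂) (h₀₂ : x₀ ≠ x₂)
    (hn₀₂ : ¬ G.Adj x₀ x₂) (h₀ : ∀ i, G.Adj x₀ (l i)) (h₁ : ∀ i, ¬ G.Adj x₁ (l i))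
    (h₂ : ∀ i, ¬ G.Adj x₂ (l i)) (hl : ∀ i j, ¬ G.Adj (l i) (l j)) :
    ¬ HFree (starSubdiv r) G := by
  have hl₀ i : l i ≠ x₀ := (h₀ i).ne'
  have hl₁ i : l i ≠ x₁ := fun h => h₂ i (h ▸ h₁₂.symm)
  have hl₂ i : l i ≠ x₂ := fun h => hn₀₂ (h ▸ h₀ i)
  let f : Fin 3 ⊕ Fin (r - 1) → V := Sum.elim ![x₀, x₁, x₂] l
  have hf : f.Injective := by
    rintro (a | i) (b | j) hab
    · fin_cases a <;> fin_cases b <;> simp_all [f, h₀₁.ne, h₁₂.ne, h₀₁.ne', h₁₂.ne']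
    · fin_cases a <;> simp_all [f, eq_comm]
    · fin_cases b <;> simp_all [f]
    · simp_all [f]
  have hadj a b : G.Adj (f a) (f b) ↔ (starSubdiv r).Adj a b := by
    rcases a with a | i <;> rcases b with b | j
    · fin_cases a <;> fin_cases b <;>
        simp [f, starSubdiv, h₀₁, h₁₂, h₀₁.symm, h₁₂.symm, hn₀₂, G.adj_comm x₂ x₀]
    · fin_cases a <;> simp [f, starSubdiv, h₀, h₁, h₂]
    · fin_cases b <;>
        simp [f, starSubdiv, G.adj_comm _ x₀, G.adj_comm _ x₁, G.adj_comm _ x₂, h₀, h₁, h₂]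
    · simp [f, starSubdiv, hl]
  exact fun h => h.elim ⟨⟨f, hf⟩, hadj _ _⟩

open Classical

variable {X : Set V} {C : Finset V} {r : ℕ}

theorem card_lt_of_hFree_starSubdiv (hr : 2 ≤ r) (hfree : HFree (starSubdiv r) G)
    (hX : IsIS G X) (hXc : IsIS G Xᶜ) {x₀ x₁ x₂ : V} (hx₀ : x₀ ∉ X) (h₀₁ : G.Adj x₀ x₁)
    (h₁₂ : G.Adj x₁ x₂) (L : Finset V) (hL : ∀ u ∈ L, G.Adj x₀ u ∧ ¬ G.Adj x₂ u) :
    #L < r - 1 := by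
  by_contra! hcard
  obtain ⟨l⟩ := Function.Embedding.nonempty_of_card_le (α := Fin (r - 1)) (β := L)
    (by simpa using hcard)
  have hlL i : (l i : V) ∈ L := (l i).2
  obtain ⟨u, hu⟩ : L.Nonempty := card_pos.mp (by omega)
  have hx₁ : x₁ ∈ X := hXc.mem_of_adj h₀₁ hx₀
  have hx₂ : x₂ ∈ Xᶜ := hX.notMem_of_adj h₁₂ hx₁
  have hLX u (hu : u ∈ L) : u ∈ X := hXc.mem_of_adj (hL u hu).1 hx₀
  refine not_hFree_starSubdiv (l.trans (Function.Embedding.subtype _)) h₀₁ h₁₂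
    (fun h => (hL u hu).2 (h ▸ (hL u hu).1)) (hXc.not_adj_s2 hx₀ hx₂)
    (fun i => (hL _ (hlL i)).1) (fun i => hX.not_adj_s2 hx₁ (hLX _ (hlL i)))
    (fun i => (hL _ (hlL i)).2) (fun i j => hX.not_adj_s2 (hLX _ (hlL i)) (hLX _ (hlL j))) hfree

theorem card_lt_of_walk (hr : 2 ≤ r) (hfree : HFree (starSubdiv r) G) (hX : IsIS G X)
    (hXc : IsIS G Xᶜ) (hC : IsVC G C) {a y : V} (haX : a ∈ X) (haC : a ∈ C) (hay : G.Adj a y)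
    (hyC : y ∉ C) {v : V} (p : G.Walk v a) (hv : v ∉ X) (D : Finset V)
    (hD : ∀ u ∈ D, G.Adj v u ∧ u ∉ C) :
    #D < (r - 1) * (p.length / 2 + 1) :=
  match p with
  | .nil => absurd haX hv
  | .cons hva .nil => by
    simpa using card_lt_of_hFree_starSubdiv hr hfree hX hXc hv hva hay D fun u hu =>
      ⟨(hD u hu).1, fun hyu => (hC hyu).elim hyC (hD u hu).2⟩
  | .cons (v := p₁) hvp₁ (.cons (v := p₂) hp₁p₂ q) => by
    have hp₂ : p₂ ∉ X := hX.notMem_of_adj hp₁p₂ (hXc.mem_of_adj hvp₁ hv)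
    -- The vertices of `D` not adjacent to `p₂` are leaves of a `K_{1,r}^+` centred at `v`
    -- with subdivided edge `v p₁ p₂`, so moving from `v` to `p₂` loses fewer than `r - 1` of `D`.
    have hfar := card_lt_of_hFree_starSubdiv hr hfree hX hXc hv hvp₁ hp₁p₂
      {u ∈ D | ¬ G.Adj p₂ u} fun u hu => by
        rw [mem_filter] at hu; exact ⟨(hD u hu.1).1, hu.2⟩
    have hnear := card_lt_of_walk hr hfree hX hXc hC haX haC hay hyC q hp₂
      {u ∈ D | G.Adj p₂ u} fun u hu => by
        rw [mem_filter] at hu; exact ⟨hu.2, (hD u hu.1).2⟩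
    have hsplit := card_filter_add_card_filter_not (s := D) (fun u => G.Adj p₂ u)
    rw [Walk.length_cons, Walk.length_cons,
      show (q.length + 1 + 1) / 2 + 1 = q.length / 2 + 1 + 1 by omega, mul_add_one]
    omega

theorem IsVC.length_add_le_of_isPath (hC : IsVC G C) {u w : V} (p : G.Walk u w)
    (hp : p.IsPath) : p.length + (if u ∈ C then 1 else 0) ≤ 2 * #{z ∈ C | z ∈ p.support} := by
  induction p with
  | @nil u =>
    split_ifs with hu
    · have : 0 < #{z ∈ C | z ∈ (Walk.nil : G.Walk u u).support} :=
        card_pos.mpr ⟨u, mem_filter.mpr ⟨hu, Walk.start_mem_support _⟩⟩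
      rw [Walk.length_nil]; omega
    · simp
  | @cons u v w h q ih =>
    rw [Walk.cons_isPath_iff] at hp
    specialize ih hp.1
    by_cases hu : u ∈ C
    · have hsupp : {z ∈ C | z ∈ (q.cons h).support} = insert u {z ∈ C | z ∈ q.support} := by
        ext z; simp only [Walk.support_cons, List.mem_cons, mem_filter, mem_insert]
        constructor
        · rintro ⟨hz, rfl | hz'⟩ <;> simp_all
        · rintro (rfl | h) <;> simp_all
      rw [hsupp, card_insert_of_notMem (by simp [hp.2]), Walk.length_cons, if_pos hu]
      split_ifs at ih <;> omega
    · have hsupp : {z ∈ C | z ∈ (q.cons h).support} = {z ∈ C | z ∈ q.support} := by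
        ext z; simp only [Walk.support_cons, List.mem_cons, mem_filter]
        constructor
        · rintro ⟨hz, rfl | hz'⟩ <;> simp_all
        · rintro ⟨hz, hz'⟩; exact ⟨hz, Or.inr hz'⟩
      rw [hsupp, Walk.length_cons, if_neg hu]
      rw [if_pos ((hC h).resolve_left hu)] at ih
      omega

variable [Fintype V]

theorem card_nbrs_notMem_lt (hr : 2 ≤ r) (hfree : HFree (starSubdiv r) G) (hX : IsIS G X)
    (hXc : IsIS G Xᶜ) (hC : IsVC G C) {a y b : V} (haX : a ∈ X) (haC : a ∈ C)
    (hay : G.Adj a y) (hyC : y ∉ C) (hbX : b ∉ X) (hbC : b ∈ C) (hba : G.Reachable b a) :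
    #{u | G.Adj b u ∧ u ∉ C} <
      (r - 1) * #{z ∈ C | G.connectedComponentMk z = G.connectedComponentMk b} := by
  obtain ⟨w⟩ := hba
  set p := w.bypass
  have hlen := hC.length_add_le_of_isPath p w.bypass_isPath
  rw [if_pos hbC] at hlen
  have hsupp : #{z ∈ C | z ∈ p.support} ≤
      #{z ∈ C | G.connectedComponentMk z = G.connectedComponentMk b} := by
    refine card_le_card fun z hz => ?_
    rw [mem_filter] at hz ⊢
    exact ⟨hz.1, ConnectedComponent.sound (p.takeUntil z hz.2).reachable.symm⟩
  calc #{u | G.Adj b u ∧ u ∉ C} < (r - 1) * (p.length / 2 + 1) :=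
        card_lt_of_walk hr hfree hX hXc hC haX haC hay hyC p hbX _ fun u hu => by
          simpa using hu
    _ ≤ _ := Nat.mul_le_mul_left _ (by omega)

theorem card_side_le_of_card_nbrs_notMem_le (hX : IsIS G X) (hC : IsVC G C)
    (c : G.ConnectedComponent) (m : ℕ)
    (hm : ∀ b ∈ C, b ∉ X → G.connectedComponentMk b = c → #{u | G.Adj b u ∧ u ∉ C} ≤ m) :
    #{v | v ∈ G.support ∧ v ∈ X ∧ G.connectedComponentMk v = c} ≤
      (m + 1) * #{z ∈ C | G.connectedComponentMk z = c} := by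
  set K := {z ∈ C | G.connectedComponentMk z = c}
  have hsub : ({v | v ∈ G.support ∧ v ∈ X ∧ G.connectedComponentMk v = c} : Finset V) ⊆
      {z ∈ K | z ∈ X} ∪ {z ∈ K | z ∉ X}.biUnion fun b => {u | G.Adj b u ∧ u ∉ C} := by
    intro v hv
    simp only [mem_filter, mem_univ, true_and, mem_support] at hv
    obtain ⟨⟨z, hvz⟩, hvX, rfl⟩ := hv
    by_cases hvC : v ∈ C
    · exact mem_union_left _ (by simp [K, hvC, hvX])
    · refine mem_union_right _ (mem_biUnion.mpr ⟨z, ?_, by simp [hvz.symm, hvC]⟩)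
      simp [K, (hC hvz).resolve_left hvC, hX.notMem_of_adj hvz hvX, hvz.symm.reachable]
  have hsplit := card_filter_add_card_filter_not (s := K) (· ∈ X)
  calc _ ≤ #{z ∈ K | z ∈ X} + #{z ∈ K | z ∉ X} * m := by
        refine (card_le_card hsub).trans <| (card_union_le _ _).trans <| Nat.add_le_add_left
          (card_biUnion_le_card_mul _ _ _ fun b hb => ?_) _
        simp only [K, mem_filter] at hb
        exact hm b hb.1.1 hb.2 hb.1.2
    _ ≤ (m + 1) * #K := by rw [← hsplit]; nlinarith

theorem exists_side_card_le (hr : 2 ≤ r) (hfree : HFree (starSubdiv r) G) (hX : IsIS G X)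
    (hXc : IsIS G Xᶜ) (hC : IsVC G C) (c : G.ConnectedComponent) :
    ∃ Y : Set V, IsIS G Y ∧ IsIS G Yᶜ ∧
      #{v | v ∈ G.support ∧ v ∈ Y ∧ G.connectedComponentMk v = c} ≤
        (r - 1) * #{z ∈ C | G.connectedComponentMk z = c} ^ 2 := by
  set k := #{z ∈ C | G.connectedComponentMk z = c}
  by_cases h : ∃ a ∈ C, a ∈ X ∧ G.connectedComponentMk a = c ∧ ∃ y, G.Adj a y ∧ y ∉ C
  · obtain ⟨a, haC, haX, hac, y, hay, hyC⟩ := h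
    refine ⟨X, hX, hXc, ?_⟩
    have hk : 0 < k := card_pos.mpr ⟨a, by simp [haC, hac]⟩
    have hrk : 0 < (r - 1) * k := Nat.mul_pos (by omega) hk
    calc _ ≤ ((r - 1) * k - 1 + 1) * k :=
          card_side_le_of_card_nbrs_notMem_le hX hC _ _ fun b hbC hbX hb =>
            Nat.le_sub_one_of_lt <| by
              have := card_nbrs_notMem_lt hr hfree hX hXc hC haX haC hay hyC hbX hbC
                (ConnectedComponent.exact (hb.trans hac.symm))
              rwa [hb] at this
      _ = (r - 1) * k ^ 2 := by rw [Nat.sub_add_cancel hrk]; ring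
  · push Not at h
    refine ⟨Xᶜ, hXc, by rwa [compl_compl], ?_⟩
    calc _ ≤ k := card_le_card fun v hv => by
          simp only [mem_filter, mem_univ, true_and, mem_support] at hv ⊢
          obtain ⟨⟨z, hvz⟩, hvX, rfl⟩ := hv
          refine ⟨by_contra fun hvC => hvC ?_, rfl⟩
          exact h z ((hC hvz).resolve_left hvC) (hXc.mem_of_adj hvz hvX)
            (ConnectedComponent.sound hvz.symm.reachable) v hvz.symm
      _ ≤ k ^ 2 := Nat.le_self_pow two_ne_zero k
      _ ≤ (r - 1) * k ^ 2 := Nat.le_mul_of_pos_left _ (by omega)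

noncomputable def sideCover (G : SimpleGraph V) (S : G.ConnectedComponent → Set V) :
    Finset V :=
  {v | v ∈ G.support ∧ v ∈ S (G.connectedComponentMk v)}

theorem isVC_sideCover {S : G.ConnectedComponent → Set V} (hSc : ∀ c, IsIS G (S c)ᶜ) :
    IsVC G (sideCover G S) := by
  intro u v h
  simp only [sideCover, mem_filter, mem_univ, true_and, mem_support]
  by_cases hu : u ∈ S (G.connectedComponentMk u)
  · exact Or.inl ⟨⟨v, h⟩, hu⟩
  · rw [ConnectedComponent.sound h.reachable] at hu
    exact Or.inr ⟨⟨u, h.symm⟩, (hSc _).mem_of_adj h hu⟩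

theorem isIS_sideCover {S : G.ConnectedComponent → Set V} (hS : ∀ c, IsIS G (S c)) :
    IsIS G (sideCover G S) := by
  intro u hu v hv _ h
  simp only [sideCover, coe_filter, mem_univ, true_and, Set.mem_ofPred_eq] at hu hv
  rw [← ConnectedComponent.sound h.reachable] at hv
  exact (hS _).not_adj_s2 hu.2 hv.2 h

end

theorem stmt_2 {V : Type*} [Fintype V] (G : SimpleGraph V) (r : ℕ)
    (hr : 2 ≤ r) (hbip : IsBip G) (hfree : HFree (starSubdiv r) G) :
    ivc G ≤ (r - 1) * (vc G) ^ 2 := by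
  classical
  obtain ⟨X, hX, hXc⟩ := hbip
  obtain ⟨C, hC, hCcard⟩ := exists_isVC_card_eq_vc G
  choose S hS hSc hScard using exists_side_card_le hr hfree hX hXc hC
  let k (c : G.ConnectedComponent) : ℕ := #{z ∈ C | G.connectedComponentMk z = c}
  calc ivc G ≤ #(sideCover G S) := Nat.sInf_le ⟨_, isVC_sideCover hSc, isIS_sideCover hS, rfl⟩
    _ = ∑ c, #{v ∈ sideCover G S | G.connectedComponentMk v = c} :=
        card_eq_sum_card_fiberwise fun v _ => mem_coe.mpr (mem_univ _)
    _ ≤ ∑ c, (r - 1) * k c ^ 2 := by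
        gcongr with c
        refine (card_le_card fun v hv => ?_).trans (hScard c)
        simp only [sideCover, mem_filter, mem_univ, true_and] at hv ⊢
        exact ⟨hv.1.1, hv.2 ▸ hv.1.2, hv.2⟩
    _ = (r - 1) * ∑ c, k c ^ 2 := (mul_sum _ _ _).symm
    _ ≤ (r - 1) * (∑ c, k c) ^ 2 := by
        gcongr; exact sum_sq_le_sq_sum_of_nonneg fun _ _ => Nat.zero_le _
    _ = (r - 1) * vc G ^ 2 := by
        rw [← hCcard, card_eq_sum_card_fiberwise (f := G.connectedComponentMk) (t := univ)
          fun v _ => mem_coe.mpr (mem_univ _)]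
end

section
/- If G is an almost complete bipartite graph (obtained from a complete bipartite graph by removing a matching), then the minimum size of an independent vertex cover of G equals the minimum size of a vertex cover of G. -/
open SimpleGraph

/-- `G` is an almost complete bipartite graph: it has a bipartition `(X, Xᶜ)`
such that every vertex has at most one non-neighbour on the other side
(so the missing edges form a matching of a complete bipartite graph). -/
def IsAlmostCompleteBip {V : Type*} (G : SimpleGraph V) : Prop :=
  ∃ X : Set V, IsIS G X ∧ IsIS G Xᶜ ∧
    (∀ x ∈ X, {y ∈ Xᶜ | ¬ G.Adj x y}.Subsingleton) ∧
    (∀ y ∈ Xᶜ, {x ∈ X | ¬ G.Adj y x}.Subsingleton)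

/-!
Let `(X, Y)` be the bipartition. Both `X` and `Y` are independent vertex covers. A vertex cover
`S` containing neither side misses some `x₀ ∈ X` and `y₀ ∈ Y`; these are non-adjacent, so any other
`x ∈ X` outside `S` would be a second non-neighbour of `y₀`, and similarly on the other side. Hence
`S` misses exactly one vertex of each side and `|S| = |X| + |Y| - 2`, which is at least
`min (|X|, |Y|)` unless `|X| = |Y| = 1`, in which case `S = ∅`.
-/

namespace IsVC

variable {V : Type*} {G : SimpleGraph V} {S : Finset V}

theorem of_isIS_compl (A : Finset V) (h : IsIS G (↑A)ᶜ) : IsVC G A := by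
  intro u v huv
  by_contra! hA
  exact h hA.1 hA.2 huv.ne huv

theorem not_adj (hS : IsVC G S) {u v : V} (hu : u ∉ S) (hv : v ∉ S) : ¬ G.Adj u v :=
  fun huv => (hS huv).elim hu hv

/-- Every vertex of `A` outside `S` is a non-neighbour of `b ∉ S`. -/
theorem erase_subset [DecidableEq V] (hS : IsVC G S) {A : Finset V} {B : Set V}
    (hB : ∀ b ∈ B, {a ∈ (↑A : Set V) | ¬ G.Adj b a}.Subsingleton) {b a₀ : V}
    (hb : b ∈ B) (hbS : b ∉ S) (ha₀ : a₀ ∈ A) (ha₀S : a₀ ∉ S) : A.erase a₀ ⊆ S := by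
  intro a ha
  obtain ⟨hne, haA⟩ := Finset.mem_erase.1 ha
  by_contra haS
  exact hne (hB b hb ⟨haA, hS.not_adj hbS haS⟩ ⟨ha₀, hS.not_adj hbS ha₀S⟩)

end IsVC

theorem ivc_eq_vc_of_forall_isVC {V : Type*} [Fintype V] {G : SimpleGraph V}
    (h : ∀ S, IsVC G S → ∃ T : Finset V, IsVC G T ∧ IsIS G ↑T ∧ T.card ≤ S.card) :
    ivc G = vc G := by
  let covers := {n | ∃ S : Finset V, IsVC G S ∧ S.card = n}
  let indepCovers := {n | ∃ S : Finset V, IsVC G S ∧ IsIS G ↑S ∧ S.card = n}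
  change sInf indepCovers = sInf covers
  obtain ⟨S, hS, hSvc⟩ : sInf covers ∈ covers :=
    Nat.sInf_mem ⟨_, Finset.univ, fun u _ _ => .inl (Finset.mem_univ u), rfl⟩
  obtain ⟨T, hT, hTi, hTS⟩ := h S hS
  have hT_mem : T.card ∈ indepCovers := ⟨T, hT, hTi, rfl⟩
  apply le_antisymm
  · exact (Nat.sInf_le hT_mem).trans (hTS.trans_eq hSvc)
  · obtain ⟨U, hU, -, hUivc⟩ : sInf indepCovers ∈ indepCovers := Nat.sInf_mem ⟨_, hT_mem⟩
    exact hUivc ▸ Nat.sInf_le ⟨U, hU, rfl⟩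

theorem IsAlmostCompleteBip.exists_isIS_card_le {V : Type*} [Fintype V] {G : SimpleGraph V}
    (h : IsAlmostCompleteBip G) {S : Finset V} (hS : IsVC G S) :
    ∃ T : Finset V, IsVC G T ∧ IsIS G ↑T ∧ T.card ≤ S.card := by
  classical
  obtain ⟨X, hX, hY, hXY, hYX⟩ := h
  lift X to Finset V using X.toFinite
  rw [← Finset.coe_compl] at hY hXY hYX
  have hXvc : IsVC G X := .of_isIS_compl X (by rwa [← Finset.coe_compl])
  have hYvc : IsVC G Xᶜ := .of_isIS_compl Xᶜ (by rwa [Finset.coe_compl, compl_compl])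
  by_cases hXS : X ⊆ S
  · exact ⟨X, hXvc, hX, Finset.card_le_card hXS⟩
  by_cases hYS : Xᶜ ⊆ S
  · exact ⟨Xᶜ, hYvc, hY, Finset.card_le_card hYS⟩
  obtain ⟨x₀, hx₀, hx₀S⟩ := Finset.not_subset.1 hXS
  obtain ⟨y₀, hy₀, hy₀S⟩ := Finset.not_subset.1 hYS
  have hcard : (X.erase x₀).card + (Xᶜ.erase y₀).card ≤ S.card := by
    rw [← Finset.card_union_of_disjoint (disjoint_compl_right.mono
      (Finset.erase_subset _ _) (Finset.erase_subset _ _))]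
    exact Finset.card_le_card (Finset.union_subset
      (hS.erase_subset hYX (Finset.mem_coe.2 hy₀) hy₀S hx₀ hx₀S)
      (hS.erase_subset hXY (Finset.mem_coe.2 hx₀) hx₀S hy₀ hy₀S))
  rw [Finset.card_erase_of_mem hx₀, Finset.card_erase_of_mem hy₀] at hcard
  by_cases hY2 : 2 ≤ Xᶜ.card
  · exact ⟨X, hXvc, hX, by omega⟩
  by_cases hX2 : 2 ≤ X.card
  · exact ⟨Xᶜ, hYvc, hY, by omega⟩
  -- `X = {x₀}` and `Xᶜ = {y₀}`, so `S`, which avoids both, is empty.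
  refine ⟨S, hS, ?_, le_rfl⟩
  suffices S = ∅ by simp [this, IsIS]
  refine Finset.eq_empty_of_forall_notMem fun v hv => ?_
  by_cases hvX : v ∈ X
  · exact hx₀S (Finset.card_le_one.1 (by omega) v hvX x₀ hx₀ ▸ hv)
  · exact hy₀S (Finset.card_le_one.1 (by omega) v (Finset.mem_compl.2 hvX) y₀ hy₀ ▸ hv)

theorem stmt_4 {V : Type*} [Fintype V] (G : SimpleGraph V)
    (h : IsAlmostCompleteBip G) : ivc G = vc G :=
  ivc_eq_vc_of_forall_isVC fun _ hS => h.exists_isIS_card_le hS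
end

section
/- If G is a bipartite graph containing no induced subgraph isomorphic to K_{1,3}+P_1 (the disjoint union of a claw and an isolated vertex), then ivc(G) ≤ vc(G) + 1. Moreover this bound is tight: the double star D_{2,2} is a (K_{1,3}+P_1)-free bipartite graph with vc = 2 and ivc = 3. -/
open SimpleGraph

/-- The double star `D_{p,q}`: two adjacent centres, the first with `p` extra
leaves and the second with `q` extra leaves. -/
def doubleStar (p q : ℕ) : SimpleGraph (Unit ⊕ Unit ⊕ Fin p ⊕ Fin q) :=
  SimpleGraph.fromRel fun u v =>
    (u = Sum.inl () ∧ v = Sum.inr (Sum.inl ())) ∨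
    (∃ i : Fin p, u = Sum.inl () ∧ v = Sum.inr (Sum.inr (Sum.inl i))) ∨
    (∃ j : Fin q, u = Sum.inr (Sum.inl ()) ∧ v = Sum.inr (Sum.inr (Sum.inr j)))

set_option maxRecDepth 100000
set_option synthInstance.maxSize 4000
set_option synthInstance.maxHeartbeats 1000000
set_option maxHeartbeats 16000000

instance (r s : ℕ) : DecidableRel (starPlus r s).Adj := fun u v => by
  simp only [starPlus, SimpleGraph.fromRel_adj]
  exact @instDecidableAnd _ _ inferInstance (@instDecidableOr _ _ inferInstance inferInstance)
instance (p q : ℕ) : DecidableRel (doubleStar p q).Adj := fun u v => by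
  simp only [doubleStar, SimpleGraph.fromRel_adj]
  exact @instDecidableAnd _ _ inferInstance (@instDecidableOr _ _ inferInstance inferInstance)


lemma free_contra {V : Type*} {G : SimpleGraph V} (hfree : HFree (starPlus 3 1) G)
    (c l0 l1 l2 w : V)
    (h01 : l0 ≠ l1) (h02 : l0 ≠ l2) (h12 : l1 ≠ l2)
    (hl0c : l0 ≠ c) (hl1c : l1 ≠ c) (hl2c : l2 ≠ c)
    (hwc : w ≠ c) (hw0 : w ≠ l0) (hw1 : w ≠ l1) (hw2 : w ≠ l2)
    (ha0 : G.Adj c l0) (ha1 : G.Adj c l1) (ha2 : G.Adj c l2)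
    (hn01 : ¬G.Adj l0 l1) (hn02 : ¬G.Adj l0 l2) (hn12 : ¬G.Adj l1 l2)
    (hcw : ¬G.Adj c w) (h0w : ¬G.Adj l0 w) (h1w : ¬G.Adj l1 w) (h2w : ¬G.Adj l2 w) :
    False := by
  set g : Fin 3 → V := ![l0, l1, l2] with hg
  have hg1 : ∀ i, G.Adj c (g i) := by
    intro i; fin_cases i
    · exact ha0
    · exact ha1
    · exact ha2
  have hg2 : ∀ i j, ¬ G.Adj (g i) (g j) := by
    have hn10 : ¬G.Adj l1 l0 := fun h => hn01 h.symm
    have hn20 : ¬G.Adj l2 l0 := fun h => hn02 h.symm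
    have hn21 : ¬G.Adj l2 l1 := fun h => hn12 h.symm
    have i0 : ¬G.Adj l0 l0 := G.irrefl
    have i1 : ¬G.Adj l1 l1 := G.irrefl
    have i2 : ¬G.Adj l2 l2 := G.irrefl
    intro i j; fin_cases i <;> fin_cases j <;> assumption
  have hgw : ∀ i, ¬ G.Adj (g i) w := by
    intro i; fin_cases i
    · exact h0w
    · exact h1w
    · exact h2w
  have hgc : ∀ i, g i ≠ c := by
    intro i; fin_cases i
    · exact hl0c
    · exact hl1c
    · exact hl2c
  have hwg : ∀ i, w ≠ g i := by
    intro i; fin_cases i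
    · exact hw0
    · exact hw1
    · exact hw2
  have hginj : ∀ i j : Fin 3, g i = g j → i = j := by
    intro i j; fin_cases i <;> fin_cases j <;> intro h
    · rfl
    · exact absurd h h01
    · exact absurd h h02
    · exact absurd h.symm h01
    · rfl
    · exact absurd h h12
    · exact absurd h.symm h02
    · exact absurd h.symm h12
    · rfl
  have hs1 : ∀ i : Fin 3, (starPlus 3 1).Adj (Sum.inl ()) (Sum.inr (Sum.inl i)) := by decide
  have hs2 : ∀ i j : Fin 3, ¬ (starPlus 3 1).Adj (Sum.inr (Sum.inl i)) (Sum.inr (Sum.inl j)) := by decide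
  have hs3 : ∀ (i : Fin 3) (j : Fin 1),
      ¬ (starPlus 3 1).Adj (Sum.inr (Sum.inl i)) (Sum.inr (Sum.inr j)) := by decide
  have hs4 : ∀ j : Fin 1, ¬ (starPlus 3 1).Adj (Sum.inl ()) (Sum.inr (Sum.inr j)) := by decide
  have hs5 : ¬ (starPlus 3 1).Adj (Sum.inl ()) (Sum.inl ()) := by decide
  have hs6 : ∀ i j : Fin 1,
      ¬ (starPlus 3 1).Adj (Sum.inr (Sum.inr i)) (Sum.inr (Sum.inr j)) := by decide
  refine hfree.false ⟨⟨Sum.elim (fun _ => c) (Sum.elim g (fun _ => w)), ?_⟩, ?_⟩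
  · rintro (⟨⟩|i|i) (⟨⟩|j|j) h
    · rfl
    · exact absurd h.symm (hgc j)
    · exact absurd h.symm hwc
    · exact absurd h (hgc i)
    · rw [hginj i j h]
    · exact absurd h.symm (hwg i)
    · exact absurd h hwc
    · exact absurd h (hwg j)
    · rw [Subsingleton.elim i j]
  · rintro (⟨⟩|i|i) (⟨⟩|j|j)
    · exact iff_of_false G.irrefl hs5
    · exact iff_of_true (hg1 j) (hs1 j)
    · exact iff_of_false hcw (hs4 j)
    · exact iff_of_true (hg1 i).symm (hs1 i).symm
    · exact iff_of_false (hg2 i j) (hs2 i j)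
    · exact iff_of_false (hgw i) (hs3 i j)
    · exact iff_of_false (fun h => hcw h.symm) (fun h => hs4 i h.symm)
    · exact iff_of_false (fun h => hgw j h.symm) (fun h => hs3 j i h.symm)
    · exact iff_of_false G.irrefl (hs6 i j)


theorem main_bound {V : Type} [Fintype V] (G : SimpleGraph V)
    (hbip : IsBip G) (hfree : HFree (starPlus 3 1) G) : ivc G ≤ vc G + 1 := by
  classical
  obtain ⟨X, hX, hX'⟩ := hbip
  have hQne : {n | ∃ S : Finset V, IsVC G S ∧ S.card = n}.Nonempty :=
    ⟨(Finset.univ : Finset V).card, Finset.univ, fun u v _ => Or.inl (Finset.mem_univ u), rfl⟩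
  obtain ⟨S0, hS0, hS0card⟩ := Nat.sInf_mem hQne
  have hPne : {m | ∃ S : Finset V, IsVC G S ∧ S.card = vc G ∧
      (S.filter fun v => v ∉ X).card = m}.Nonempty := ⟨_, S0, hS0, hS0card, rfl⟩
  obtain ⟨S, hS, hScard, hSB⟩ := Nat.sInf_mem hPne
  set A := S.filter (fun v => v ∈ X) with hAdef
  set B := S.filter (fun v => v ∉ X) with hBdef
  have hmemA : ∀ {v}, v ∈ A ↔ v ∈ S ∧ v ∈ X := fun {v} => Finset.mem_filter
  have hmemB : ∀ {v}, v ∈ B ↔ v ∈ S ∧ v ∉ X := fun {v} => Finset.mem_filter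
  have hABcard : A.card + B.card = S.card :=
    Finset.card_filter_add_card_filter_not (p := fun v => v ∈ X)
  by_cases hSind : IsIS G ↑S
  · exact le_trans (Nat.sInf_le ⟨S, hS, hSind, hScard⟩) (Nat.le_succ _)
  have hedge : ∃ a b, a ∈ S ∧ b ∈ S ∧ a ∈ X ∧ b ∉ X ∧ G.Adj a b := by
    simp only [IsIS, Set.Pairwise] at hSind
    push_neg at hSind
    obtain ⟨u, hu, v, hv, hne, hadj⟩ := hSind
    rw [Finset.mem_coe] at hu hv
    by_cases hux : u ∈ X
    · have hvx : v ∉ X := fun hvx => hX hux hvx hne hadj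
      exact ⟨u, v, hu, hv, hux, hvx, hadj⟩
    · have hvx : v ∈ X := by
        by_contra hvx
        exact hX' hux hvx hne hadj
      exact ⟨v, u, hv, hu, hvx, hux, hadj.symm⟩
  obtain ⟨a, b, haS, hbS, haX, hbX, hab⟩ := hedge
  have hout : ∀ {u v}, u ∉ S → v ∉ S → ¬ G.Adj u v := fun {u v} hu hv hadj =>
    (hS hadj).elim hu hv
  set D := Finset.univ.filter (fun x => x ∉ S ∧ ∃ b' ∈ S, b' ∉ X ∧ G.Adj b' x) with hDdef
  set E := Finset.univ.filter (fun y => y ∉ S ∧ ∃ a' ∈ S, a' ∈ X ∧ G.Adj a' y) with hEdef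
  have hmemD : ∀ {x}, x ∈ D ↔ x ∉ S ∧ ∃ b' ∈ S, b' ∉ X ∧ G.Adj b' x := by
    intro x; rw [hDdef, Finset.mem_filter]
    simp only [Finset.mem_univ, true_and]
  have hmemE : ∀ {y}, y ∈ E ↔ y ∉ S ∧ ∃ a' ∈ S, a' ∈ X ∧ G.Adj a' y := by
    intro y; rw [hEdef, Finset.mem_filter]
    simp only [Finset.mem_univ, true_and]
  have hDX : ∀ {x}, x ∈ D → x ∈ X := by
    intro x hx
    obtain ⟨hxS, b', hb'S, hb'X, hadj⟩ := hmemD.1 hx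
    by_contra hxX
    exact hX' hb'X hxX hadj.ne hadj
  have hEX : ∀ {y}, y ∈ E → y ∉ X := by
    intro y hy hyX
    obtain ⟨hyS, a', ha'S, ha'X, hadj⟩ := hmemE.1 hy
    exact hX ha'X hyX hadj.ne hadj
  have hDS : ∀ {x}, x ∈ D → x ∉ S := fun {x} hx => (hmemD.1 hx).1
  have hES : ∀ {y}, y ∈ E → y ∉ S := fun {y} hy => (hmemE.1 hy).1
  by_cases hDle : D.card ≤ B.card + 1
  · have hcov : IsVC G (A ∪ D) := by
      intro u v hadj
      rcases hS hadj with hu | hv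
      · by_cases hux : u ∈ X
        · exact Or.inl (Finset.mem_union_left _ (hmemA.2 ⟨hu, hux⟩))
        · by_cases hvS : v ∈ S
          · have hvx : v ∈ X := by
              by_contra hvx; exact hX' hux hvx hadj.ne hadj
            exact Or.inr (Finset.mem_union_left _ (hmemA.2 ⟨hvS, hvx⟩))
          · exact Or.inr (Finset.mem_union_right _ (hmemD.2 ⟨hvS, u, hu, hux, hadj⟩))
      · by_cases hvx : v ∈ X
        · exact Or.inr (Finset.mem_union_left _ (hmemA.2 ⟨hv, hvx⟩))
        · by_cases huS : u ∈ S
          · have hux : u ∈ X := by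
              by_contra hux
              exact hX' hux hvx hadj.ne hadj
            exact Or.inl (Finset.mem_union_left _ (hmemA.2 ⟨huS, hux⟩))
          · exact Or.inl (Finset.mem_union_right _ (hmemD.2 ⟨huS, v, hv, hvx, hadj.symm⟩))
    have hind : IsIS G ↑(A ∪ D) := by
      apply hX.mono
      intro u hu
      rw [Finset.mem_coe, Finset.mem_union] at hu
      rcases hu with h | h
      · exact (hmemA.1 h).2
      · exact hDX h
    have hivc : ivc G ≤ (A ∪ D).card := Nat.sInf_le ⟨_, hcov, hind, rfl⟩
    have hle : (A ∪ D).card ≤ A.card + D.card := Finset.card_union_le _ _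
    omega
  by_cases hEle : E.card ≤ A.card + 1
  · have hcov : IsVC G (B ∪ E) := by
      intro u v hadj
      rcases hS hadj with hu | hv
      · by_cases hux : u ∈ X
        · by_cases hvS : v ∈ S
          · have hvx : v ∉ X := fun hvx => hX hux hvx hadj.ne hadj
            exact Or.inr (Finset.mem_union_left _ (hmemB.2 ⟨hvS, hvx⟩))
          · exact Or.inr (Finset.mem_union_right _ (hmemE.2 ⟨hvS, u, hu, hux, hadj⟩))
        · exact Or.inl (Finset.mem_union_left _ (hmemB.2 ⟨hu, hux⟩))
      · by_cases hvx : v ∈ X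
        · by_cases huS : u ∈ S
          · have hux : u ∉ X := fun hux => hX hux hvx hadj.ne hadj
            exact Or.inl (Finset.mem_union_left _ (hmemB.2 ⟨huS, hux⟩))
          · exact Or.inl (Finset.mem_union_right _ (hmemE.2 ⟨huS, v, hv, hvx, hadj.symm⟩))
        · exact Or.inr (Finset.mem_union_left _ (hmemB.2 ⟨hv, hvx⟩))
    have hind : IsIS G ↑(B ∪ E) := by
      apply hX'.mono
      intro u hu
      rw [Finset.mem_coe, Finset.mem_union] at hu
      rw [Set.mem_compl_iff]
      rcases hu with h | h
      · exact (hmemB.1 h).2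
      · exact hEX h
    have hivc : ivc G ≤ (B ∪ E).card := Nat.sInf_le ⟨_, hcov, hind, rfl⟩
    have hle : (B ∪ E).card ≤ B.card + E.card := Finset.card_union_le _ _
    omega
  exfalso
  push_neg at hDle hEle
  have haA : a ∈ A := hmemA.2 ⟨haS, haX⟩
  have hbB : b ∈ B := hmemB.2 ⟨hbS, hbX⟩
  have hAcard : 1 ≤ A.card := Finset.card_pos.2 ⟨a, haA⟩
  have hBcard : 1 ≤ B.card := Finset.card_pos.2 ⟨b, hbB⟩
  have hE3 : 3 ≤ E.card := by omega
  have hD1 : D.Nonempty := Finset.card_pos.1 (by omega)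
  obtain ⟨x₀, hx₀D⟩ := hD1
  have hystar : ∃ y ∈ E, ¬ G.Adj a y := by
    by_contra hcon
    push_neg at hcon
    obtain ⟨E', hE'sub, hE'card⟩ := Finset.exists_subset_card_eq (s := E) (n := 3) hE3
    obtain ⟨y1, y2, y3, h12, h13, h23, rfl⟩ := Finset.card_eq_three.1 hE'card
    have m1 : y1 ∈ E := hE'sub (by simp : y1 ∈ ({y1, y2, y3} : Finset V))
    have m2 : y2 ∈ E := hE'sub (by simp)
    have m3 : y3 ∈ E := hE'sub (by simp)
    have hyne : ∀ {y}, y ∈ E → y ≠ a := fun {y} hy h => (hES hy) (h ▸ haS)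
    have hxny : ∀ {y}, y ∈ E → x₀ ≠ y := fun {y} hy h => (hEX hy) (h ▸ hDX hx₀D)
    have hnadjE : ∀ {y y'}, y ∈ E → y' ∈ E → y ≠ y' → ¬ G.Adj y y' :=
      fun {y y'} hy hy' hne => hX' (hEX hy) (hEX hy') hne
    exact free_contra hfree a y1 y2 y3 x₀ h12 h13 h23 (hyne m1) (hyne m2) (hyne m3)
      (fun h => (hDS hx₀D) (h ▸ haS)) (hxny m1) (hxny m2) (hxny m3)
      (hcon y1 m1) (hcon y2 m2) (hcon y3 m3)
      (hnadjE m1 m2 h12) (hnadjE m1 m3 h13) (hnadjE m2 m3 h23)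
      (hX haX (hDX hx₀D) (fun h => (hDS hx₀D) (h ▸ haS)))
      (hout (hES m1) (hDS hx₀D)) (hout (hES m2) (hDS hx₀D)) (hout (hES m3) (hDS hx₀D))
  obtain ⟨ys, hysE, hysa⟩ := hystar
  set Db := D.filter (fun x => G.Adj b x) with hDbdef
  have hmemDb : ∀ {x}, x ∈ Db ↔ x ∈ D ∧ G.Adj b x := fun {x} => Finset.mem_filter
  have hDbne : Db.Nonempty := by
    have hnotcov : ¬ IsVC G (S.erase b) := by
      intro hcov
      have h1 : vc G ≤ (S.erase b).card := Nat.sInf_le ⟨_, hcov, rfl⟩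
      rw [Finset.card_erase_of_mem hbS] at h1
      have h2 : 1 ≤ S.card := Finset.card_pos.2 ⟨b, hbS⟩
      omega
    simp only [IsVC] at hnotcov
    push_neg at hnotcov
    obtain ⟨u, v, hadj, hu, hv⟩ := hnotcov
    rcases hS hadj with huS | hvS
    · have hub : u = b := by
        by_contra h; exact hu (Finset.mem_erase.2 ⟨h, huS⟩)
      subst hub
      have hvS' : v ∉ S := fun hvS' => hv (Finset.mem_erase.2 ⟨hadj.ne', hvS'⟩)
      exact ⟨v, hmemDb.2 ⟨hmemD.2 ⟨hvS', u, huS, hbX, hadj⟩, hadj⟩⟩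
    · have hvb : v = b := by
        by_contra h; exact hv (Finset.mem_erase.2 ⟨h, hvS⟩)
      subst hvb
      have huS' : u ∉ S := fun huS' => hu (Finset.mem_erase.2 ⟨hadj.ne, huS'⟩)
      exact ⟨u, hmemDb.2 ⟨hmemD.2 ⟨huS', v, hvS, hbX, hadj.symm⟩, hadj.symm⟩⟩
  have hysS : ys ∉ S := hES hysE
  have hysX : ys ∉ X := hEX hysE
  have hDb2 : Db.card ≤ 2 := by
    by_contra hgt
    push_neg at hgt
    obtain ⟨Db', hsub, hcard3⟩ := Finset.exists_subset_card_eq (s := Db) (n := 3) hgt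
    obtain ⟨x1, x2, x3, h12, h13, h23, rfl⟩ := Finset.card_eq_three.1 hcard3
    have m1 := hmemDb.1 (hsub (by simp : x1 ∈ ({x1, x2, x3} : Finset V)))
    have m2 := hmemDb.1 (hsub (by simp : x2 ∈ ({x1, x2, x3} : Finset V)))
    have m3 := hmemDb.1 (hsub (by simp : x3 ∈ ({x1, x2, x3} : Finset V)))
    have hxb : ∀ {x}, x ∈ D → x ≠ b := fun {x} hx h => (hDS hx) (h ▸ hbS)
    have hysx : ∀ {x}, x ∈ D → ys ≠ x := fun {x} hx h => hysX (h ▸ hDX hx)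
    have hnadjD : ∀ {x x'}, x ∈ D → x' ∈ D → x ≠ x' → ¬ G.Adj x x' :=
      fun {x x'} hx hx' hne => hX (hDX hx) (hDX hx') hne
    exact free_contra hfree b x1 x2 x3 ys h12 h13 h23 (hxb m1.1) (hxb m2.1) (hxb m3.1)
      (fun h => hysS (h ▸ hbS)) (hysx m1.1) (hysx m2.1) (hysx m3.1)
      m1.2 m2.2 m3.2
      (hnadjD m1.1 m2.1 h12) (hnadjD m1.1 m3.1 h13) (hnadjD m2.1 m3.1 h23)
      (hX' hbX hysX (fun h => hysS (h ▸ hbS)))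
      (hout (hDS m1.1) hysS) (hout (hDS m2.1) hysS) (hout (hDS m3.1) hysS)
  have hDb1 : Db.card ≠ 1 := by
    intro h1
    obtain ⟨x0, hx0⟩ := Finset.card_eq_one.1 h1
    have hx0Db : x0 ∈ Db := by rw [hx0]; exact Finset.mem_singleton_self x0
    obtain ⟨hx0D, hx0adj⟩ := hmemDb.1 hx0Db
    have hx0S : x0 ∉ S := hDS hx0D
    have hcov' : IsVC G (insert x0 (S.erase b)) := by
      intro u v hadj
      rcases hS hadj with huS | hvS
      · by_cases hub : u = b
        · subst hub
          by_cases hvS : v ∈ S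
          · exact Or.inr (Finset.mem_insert_of_mem (Finset.mem_erase.2 ⟨hadj.ne', hvS⟩))
          · have hvDb : v ∈ Db := hmemDb.2 ⟨hmemD.2 ⟨hvS, u, huS, hbX, hadj⟩, hadj⟩
            rw [hx0, Finset.mem_singleton] at hvDb
            exact Or.inr (by rw [hvDb]; exact Finset.mem_insert_self x0 _)
        · exact Or.inl (Finset.mem_insert_of_mem (Finset.mem_erase.2 ⟨hub, huS⟩))
      · by_cases hvb : v = b
        · subst hvb
          by_cases huS : u ∈ S
          · exact Or.inl (Finset.mem_insert_of_mem (Finset.mem_erase.2 ⟨hadj.ne, huS⟩))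
          · have huDb : u ∈ Db := hmemDb.2 ⟨hmemD.2 ⟨huS, v, hvS, hbX, hadj.symm⟩, hadj.symm⟩
            rw [hx0, Finset.mem_singleton] at huDb
            exact Or.inl (by rw [huDb]; exact Finset.mem_insert_self x0 _)
        · exact Or.inr (Finset.mem_insert_of_mem (Finset.mem_erase.2 ⟨hvb, hvS⟩))
    have hcard' : (insert x0 (S.erase b)).card = vc G := by
      rw [Finset.card_insert_of_notMem (fun hmem => hx0S (Finset.mem_of_mem_erase hmem)),
        Finset.card_erase_of_mem hbS]
      have h2 : 1 ≤ S.card := Finset.card_pos.2 ⟨b, hbS⟩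
      omega
    have hfilt : ((insert x0 (S.erase b)).filter fun v => v ∉ X).card < B.card := by
      have hx0X : x0 ∈ X := hDX hx0D
      rw [Finset.filter_insert, if_neg (by simp [hx0X]), Finset.filter_erase,
        Finset.card_erase_of_mem (show b ∈ Finset.filter (fun v => v ∉ X) S from hbB)]
      rw [← hBdef]
      omega
    have hmem' : ((insert x0 (S.erase b)).filter fun v => v ∉ X).card ∈
        {m | ∃ S : Finset V, IsVC G S ∧ S.card = vc G ∧ (S.filter fun v => v ∉ X).card = m} :=
      ⟨insert x0 (S.erase b), hcov', hcard', rfl⟩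
    have hmin := Nat.sInf_le hmem'
    omega
  have hDbcard : Db.card = 2 := by
    have := Finset.card_pos.2 hDbne
    omega
  obtain ⟨x1, x2, h12, hDbeq⟩ := Finset.card_eq_two.1 hDbcard
  have m1 : x1 ∈ Db := by rw [hDbeq]; simp
  have m2 : x2 ∈ Db := by rw [hDbeq]; simp
  obtain ⟨hx1D, hx1adj⟩ := hmemDb.1 m1
  obtain ⟨hx2D, hx2adj⟩ := hmemDb.1 m2
  have hx1S : x1 ∉ S := hDS hx1D
  have hx2S : x2 ∉ S := hDS hx2D
  have hx1X : x1 ∈ X := hDX hx1D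
  have hx2X : x2 ∈ X := hDX hx2D
  have hx1a : x1 ≠ a := fun h => hx1S (h ▸ haS)
  have hx2a : x2 ≠ a := fun h => hx2S (h ▸ haS)
  exact free_contra hfree b x1 x2 a ys h12 hx1a hx2a
    (fun h => hx1S (h ▸ hbS)) (fun h => hx2S (h ▸ hbS)) hab.ne
    (fun h => hysS (h ▸ hbS)) (fun h => hysX (by rw [h]; exact hx1X))
    (fun h => hysX (by rw [h]; exact hx2X)) (fun h => hysX (by rw [h]; exact haX))
    hx1adj hx2adj hab.symm
    (hX hx1X hx2X h12) (hX hx1X haX hx1a) (hX hx2X haX hx2a)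
    (hX' hbX hysX (fun h => hysS (h ▸ hbS)))
    (hout hx1S hysS) (hout hx2S hysS) hysa

set_option maxRecDepth 100000 in
set_option synthInstance.maxSize 2000 in
set_option synthInstance.maxHeartbeats 1000000 in
set_option maxHeartbeats 4000000 in
lemma ds_no_claw : ∀ c l0 l1 l2 w : (Unit ⊕ Unit ⊕ Fin 2 ⊕ Fin 2),
    (doubleStar 2 2).Adj c l0 → (doubleStar 2 2).Adj c l1 → (doubleStar 2 2).Adj c l2 →
    l0 ≠ l1 → l0 ≠ l2 → l1 ≠ l2 → w ≠ c → w ≠ l0 → w ≠ l1 → w ≠ l2 →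
    ¬(doubleStar 2 2).Adj c w → ¬(doubleStar 2 2).Adj l0 w → ¬(doubleStar 2 2).Adj l1 w →
    ¬(doubleStar 2 2).Adj l2 w → False := by decide

lemma ds_free : HFree (starPlus 3 1) (doubleStar 2 2) := by
  constructor
  intro e
  have adj : ∀ u v, (doubleStar 2 2).Adj (e u) (e v) ↔ (starPlus 3 1).Adj u v :=
    fun u v => e.map_rel_iff
  have inj : ∀ {u v}, u ≠ v → e u ≠ e v := fun {u v} h => fun he => h (e.injective he)
  exact ds_no_claw (e (Sum.inl ())) (e (Sum.inr (Sum.inl 0))) (e (Sum.inr (Sum.inl 1)))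
    (e (Sum.inr (Sum.inl 2))) (e (Sum.inr (Sum.inr 0)))
    ((adj _ _).2 (by decide)) ((adj _ _).2 (by decide)) ((adj _ _).2 (by decide))
    (inj (by decide)) (inj (by decide)) (inj (by decide))
    (inj (by decide)) (inj (by decide)) (inj (by decide)) (inj (by decide))
    (fun h => (by decide : ¬ (starPlus 3 1).Adj (Sum.inl ()) (Sum.inr (Sum.inr 0))) ((adj _ _).1 h))
    (fun h => (by decide : ¬ (starPlus 3 1).Adj (Sum.inr (Sum.inl 0)) (Sum.inr (Sum.inr 0))) ((adj _ _).1 h))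
    (fun h => (by decide : ¬ (starPlus 3 1).Adj (Sum.inr (Sum.inl 1)) (Sum.inr (Sum.inr 0))) ((adj _ _).1 h))
    (fun h => (by decide : ¬ (starPlus 3 1).Adj (Sum.inr (Sum.inl 2)) (Sum.inr (Sum.inr 0))) ((adj _ _).1 h))

lemma ds_bip : IsBip (doubleStar 2 2) := by
  refine ⟨{u | u = Sum.inl () ∨ u = Sum.inr (Sum.inr (Sum.inr 0)) ∨
      u = Sum.inr (Sum.inr (Sum.inr 1))}, ?_, ?_⟩
  · intro u hu v hv hne
    simp only [Set.mem_setOf_eq] at hu hv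
    exact (by decide : ∀ u v : (Unit ⊕ Unit ⊕ Fin 2 ⊕ Fin 2),
      (u = Sum.inl () ∨ u = Sum.inr (Sum.inr (Sum.inr 0)) ∨ u = Sum.inr (Sum.inr (Sum.inr 1))) →
      (v = Sum.inl () ∨ v = Sum.inr (Sum.inr (Sum.inr 0)) ∨ v = Sum.inr (Sum.inr (Sum.inr 1))) →
      u ≠ v → ¬(doubleStar 2 2).Adj u v) u v hu hv hne
  · intro u hu v hv hne
    simp only [Set.mem_compl_iff, Set.mem_setOf_eq] at hu hv
    exact (by decide : ∀ u v : (Unit ⊕ Unit ⊕ Fin 2 ⊕ Fin 2),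
      ¬(u = Sum.inl () ∨ u = Sum.inr (Sum.inr (Sum.inr 0)) ∨ u = Sum.inr (Sum.inr (Sum.inr 1))) →
      ¬(v = Sum.inl () ∨ v = Sum.inr (Sum.inr (Sum.inr 0)) ∨ v = Sum.inr (Sum.inr (Sum.inr 1))) →
      u ≠ v → ¬(doubleStar 2 2).Adj u v) u v hu hv hne

set_option maxRecDepth 100000 in
set_option synthInstance.maxSize 2000 in
set_option synthInstance.maxHeartbeats 1000000 in
set_option maxHeartbeats 16000000 in
lemma ds_vc_low : ∀ S : Finset (Unit ⊕ Unit ⊕ Fin 2 ⊕ Fin 2),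
    (∀ u v, (doubleStar 2 2).Adj u v → u ∈ S ∨ v ∈ S) → 2 ≤ S.card := by decide

set_option maxRecDepth 100000 in
set_option synthInstance.maxSize 2000 in
set_option synthInstance.maxHeartbeats 1000000 in
set_option maxHeartbeats 16000000 in
lemma ds_ivc_low : ∀ S : Finset (Unit ⊕ Unit ⊕ Fin 2 ⊕ Fin 2),
    (∀ u v, (doubleStar 2 2).Adj u v → u ∈ S ∨ v ∈ S) →
    (∀ u ∈ S, ∀ v ∈ S, u ≠ v → ¬(doubleStar 2 2).Adj u v) → 3 ≤ S.card := by decide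

lemma ds_vc : vc (doubleStar 2 2) = 2 := by
  have hcov : IsVC (doubleStar 2 2)
      ({Sum.inl (), Sum.inr (Sum.inl ())} : Finset (Unit ⊕ Unit ⊕ Fin 2 ⊕ Fin 2)) :=
    fun u v h => (by decide : ∀ u v, (doubleStar 2 2).Adj u v →
      u ∈ ({Sum.inl (), Sum.inr (Sum.inl ())} : Finset (Unit ⊕ Unit ⊕ Fin 2 ⊕ Fin 2)) ∨
      v ∈ ({Sum.inl (), Sum.inr (Sum.inl ())} : Finset (Unit ⊕ Unit ⊕ Fin 2 ⊕ Fin 2))) u v h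
  have hmem : (2 : ℕ) ∈ {n | ∃ S : Finset (Unit ⊕ Unit ⊕ Fin 2 ⊕ Fin 2),
      IsVC (doubleStar 2 2) S ∧ S.card = n} := ⟨_, hcov, by decide⟩
  refine le_antisymm (Nat.sInf_le hmem) (le_csInf ⟨2, hmem⟩ ?_)
  rintro n ⟨S, hS, rfl⟩
  exact ds_vc_low S (fun u v h => hS h)

lemma ds_ivc : ivc (doubleStar 2 2) = 3 := by
  have hcov : IsVC (doubleStar 2 2)
      ({Sum.inl (), Sum.inr (Sum.inr (Sum.inr 0)), Sum.inr (Sum.inr (Sum.inr 1))} :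
        Finset (Unit ⊕ Unit ⊕ Fin 2 ⊕ Fin 2)) :=
    fun u v h => (by decide : ∀ u v, (doubleStar 2 2).Adj u v →
      u ∈ ({Sum.inl (), Sum.inr (Sum.inr (Sum.inr 0)), Sum.inr (Sum.inr (Sum.inr 1))} :
        Finset (Unit ⊕ Unit ⊕ Fin 2 ⊕ Fin 2)) ∨
      v ∈ ({Sum.inl (), Sum.inr (Sum.inr (Sum.inr 0)), Sum.inr (Sum.inr (Sum.inr 1))} :
        Finset (Unit ⊕ Unit ⊕ Fin 2 ⊕ Fin 2))) u v h
  have hind : IsIS (doubleStar 2 2)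
      ↑({Sum.inl (), Sum.inr (Sum.inr (Sum.inr 0)), Sum.inr (Sum.inr (Sum.inr 1))} :
        Finset (Unit ⊕ Unit ⊕ Fin 2 ⊕ Fin 2)) := by
    intro u hu v hv hne
    rw [Finset.mem_coe] at hu hv
    exact (by decide : ∀ u v, u ∈ ({Sum.inl (), Sum.inr (Sum.inr (Sum.inr 0)),
        Sum.inr (Sum.inr (Sum.inr 1))} : Finset (Unit ⊕ Unit ⊕ Fin 2 ⊕ Fin 2)) →
      v ∈ ({Sum.inl (), Sum.inr (Sum.inr (Sum.inr 0)), Sum.inr (Sum.inr (Sum.inr 1))} :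
        Finset (Unit ⊕ Unit ⊕ Fin 2 ⊕ Fin 2)) → u ≠ v → ¬(doubleStar 2 2).Adj u v) u v hu hv hne
  have hmem : (3 : ℕ) ∈ {n | ∃ S : Finset (Unit ⊕ Unit ⊕ Fin 2 ⊕ Fin 2),
      IsVC (doubleStar 2 2) S ∧ IsIS (doubleStar 2 2) ↑S ∧ S.card = n} :=
    ⟨_, hcov, hind, by decide⟩
  refine le_antisymm (Nat.sInf_le hmem) (le_csInf ⟨3, hmem⟩ ?_)
  rintro n ⟨S, hS, hSi, rfl⟩
  exact ds_ivc_low S (fun u v h => hS h)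
    (fun u hu v hv hne => hSi (Finset.mem_coe.2 hu) (Finset.mem_coe.2 hv) hne)


theorem stmt_6 :
    (∀ {V : Type} [Fintype V] (G : SimpleGraph V),
        IsBip G → HFree (starPlus 3 1) G → ivc G ≤ vc G + 1) ∧
      (HFree (starPlus 3 1) (doubleStar 2 2) ∧ IsBip (doubleStar 2 2) ∧
        vc (doubleStar 2 2) = 2 ∧ ivc (doubleStar 2 2) = 3) := by
  refine ⟨?_, ds_free, ds_bip, ds_vc, ds_ivc⟩
  intro V _ G hbip hfree
  exact main_bound G hbip hfree
end

section
/- For r ≥ 1 and s ≥ 2, let D_s^r be the graph obtained from two disjoint stars K_{1,s} and a path P_{2r} by identifying the two endpoints of the path with the two star centers. Then the minimum vertex cover of D_s^r has size r+1 and the minimum independent vertex cover has size r+s. -/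
/-!
Label the vertices so that the path vertices `2k-1, 2k` share the label `k` and the leaves of the
two stars get the labels `0` and `r` of their centres: each of the `r + 1` label classes contains
an edge, so every vertex cover meets all of them, while the even path vertices together with the
last one meet each class exactly once.

An independent vertex cover is a colour class of the 2-colouring of the tree, so it contains
exactly one of the two centres (the path between them has odd length). It then contains all `s`
leaves of the other star, besides one vertex of each of the `r` edges `{2k, 2k+1}` of the path;
the even path vertices and the leaves of the far star attain `r + s`.
-/

open SimpleGraph

/-- The graph `D_s^r`: two disjoint stars `K_{1,s}` whose centres are the two
endpoints of a path on `2r` vertices.  The path vertices are `Sum.inl i` for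
`i : Fin (2r)` (with `Sum.inl 0` and the last path vertex the star centres),
and the leaves of the two stars are `Sum.inr (Sum.inl a)` and
`Sum.inr (Sum.inr b)` respectively. -/
def Dsr (r s : ℕ) : SimpleGraph (Fin (2 * r) ⊕ Fin s ⊕ Fin s) :=
  SimpleGraph.fromRel fun u v =>
    (∃ i j : Fin (2 * r), u = Sum.inl i ∧ v = Sum.inl j ∧ (j : ℕ) = (i : ℕ) + 1) ∨
    (∃ i : Fin (2 * r), (i : ℕ) = 0 ∧ ∃ a : Fin s, u = Sum.inl i ∧ v = Sum.inr (Sum.inl a)) ∨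
    (∃ i : Fin (2 * r), (i : ℕ) = 2 * r - 1 ∧ ∃ b : Fin s, u = Sum.inl i ∧ v = Sum.inr (Sum.inr b))

open Finset

section VertexCover

variable {V : Type*} {G : SimpleGraph V} {S : Finset V}

lemma vc_eq_of_le {T : Finset V} {n : ℕ} (hT : IsVC G T) (hTn : #T ≤ n)
    (h : ∀ S : Finset V, IsVC G S → n ≤ #S) : vc G = n := by
  have hmem : #T ∈ {n | ∃ S : Finset V, IsVC G S ∧ #S = n} := ⟨T, hT, rfl⟩
  exact le_antisymm ((Nat.sInf_le hmem).trans hTn)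
    (le_csInf ⟨_, hmem⟩ fun _ ⟨S, hS, hSn⟩ => hSn ▸ h S hS)

lemma ivc_eq_of_le {T : Finset V} {n : ℕ} (hT : IsVC G T) (hTi : IsIS G T) (hTn : #T ≤ n)
    (h : ∀ S : Finset V, IsVC G S → IsIS G S → n ≤ #S) : ivc G = n := by
  have hmem : #T ∈ {n | ∃ S : Finset V, IsVC G S ∧ IsIS G S ∧ #S = n} :=
    ⟨T, hT, hTi, rfl⟩
  exact le_antisymm ((Nat.sInf_le hmem).trans hTn)
    (le_csInf ⟨_, hmem⟩ fun _ ⟨S, hS, hSi, hSn⟩ => hSn ▸ h S hS hSi)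

lemma IsVC.exists_mem_eq {α : Type*} (hS : IsVC G S) {f : V → α} {u v : V} {k : α}
    (huv : G.Adj u v) (hu : f u = k) (hv : f v = k) : ∃ w ∈ S, f w = k := by
  rcases hS huv with h | h
  exacts [⟨u, h, hu⟩, ⟨v, h, hv⟩]

lemma IsVC.mem_iff_notMem (hS : IsVC G S) (hI : IsIS G S) {u v : V} (huv : G.Adj u v) :
    u ∈ S ↔ v ∉ S :=
  ⟨fun hu hv => hI hu hv huv.ne huv, (hS huv).resolve_right⟩

lemma IsVC.mem_iff_mem_iff_even (hS : IsVC G S) (hI : IsIS G S) {p : ℕ → V} {m : ℕ}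
    (hp : ∀ i < m, G.Adj (p i) (p (i + 1))) : (p m ∈ S ↔ p 0 ∈ S) ↔ Even m := by
  induction m with
  | zero => simp
  | succ m ih =>
    have hstep := hS.mem_iff_notMem hI (hp m m.lt_add_one)
    rw [Nat.even_add_one, ← ih fun i hi => hp i (hi.trans m.lt_add_one)]
    tauto

end VertexCover

namespace Dsr

variable {r s : ℕ}

@[simp] lemma adj_inl_inl {i j : Fin (2 * r)} :
    (Dsr r s).Adj (.inl i) (.inl j) ↔ (j : ℕ) = i + 1 ∨ (i : ℕ) = j + 1 := by
  simp only [Dsr, fromRel_adj]; simp; omega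

@[simp] lemma adj_inl_leaf₁ {i : Fin (2 * r)} {a : Fin s} :
    (Dsr r s).Adj (.inl i) (.inr (.inl a)) ↔ (i : ℕ) = 0 := by
  simp [Dsr]

@[simp] lemma adj_inl_leaf₂ {i : Fin (2 * r)} {b : Fin s} :
    (Dsr r s).Adj (.inl i) (.inr (.inr b)) ↔ (i : ℕ) = 2 * r - 1 := by
  simp [Dsr]

@[simp] lemma not_adj_inr_inr {x y : Fin s ⊕ Fin s} : ¬ (Dsr r s).Adj (.inr x) (.inr y) := by
  simp [Dsr]

def vcCover (r s : ℕ) : Finset (Fin (2 * r) ⊕ Fin s ⊕ Fin s) :=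
  (univ.filter fun i : Fin (2 * r) => (i : ℕ) % 2 = 0 ∨ (i : ℕ) = 2 * r - 1).disjSum ∅

def ivcCover (r s : ℕ) : Finset (Fin (2 * r) ⊕ Fin s ⊕ Fin s) :=
  (univ.filter fun i : Fin (2 * r) => (i : ℕ) % 2 = 0).disjSum
    ((∅ : Finset (Fin s)).disjSum univ)

def vcLabel (r s : ℕ) : Fin (2 * r) ⊕ Fin s ⊕ Fin s → ℕ :=
  Sum.elim (fun i => (i + 1) / 2) (Sum.elim (fun _ => 0) (fun _ => r))

def ivcLabel (r s : ℕ) : Fin (2 * r) ⊕ Fin s ⊕ Fin s → ℕ :=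
  Sum.elim (fun i => i / 2) (Sum.elim (fun a => r + a) (fun b => r + b))

lemma isVC_vcCover : IsVC (Dsr r s) (vcCover r s) := by
  rintro (i | a | b) (j | a' | b') h <;> simp_all [vcCover, adj_comm]; omega

lemma isVC_ivcCover : IsVC (Dsr r s) (ivcCover r s) := by
  rintro (i | a | b) (j | a' | b') h <;> simp_all [ivcCover, adj_comm]; omega

lemma isIS_ivcCover : IsIS (Dsr r s) (ivcCover r s) := by
  rintro (i | a | b) hu (j | a' | b') hv - h <;> simp_all [ivcCover, adj_comm] <;> omega

lemma card_vcCover_le : #(vcCover r s) ≤ r + 1 := by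
  simpa using card_le_card_of_injOn (vcLabel r s) (t := range (r + 1))
    (by rintro (i | a | b) h <;> simp_all [vcCover, vcLabel]; omega)
    (by rintro (i | a | b) hu (j | a' | b') hv h <;> simp_all [vcCover, vcLabel]; omega)

lemma card_ivcCover_le : #(ivcCover r s) ≤ r + s := by
  simpa using card_le_card_of_injOn (ivcLabel r s) (t := range (r + s))
    (by rintro (i | a | b) h <;> simp_all [ivcCover, ivcLabel]; omega)
    (by rintro (i | a | b) hu (j | a' | b') hv h <;>
      simp_all [ivcCover, ivcLabel, Fin.ext_iff] <;> omega)

lemma le_card_of_isVC (hr : 0 < r) (hs : 0 < s) {S : Finset (Fin (2 * r) ⊕ Fin s ⊕ Fin s)}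
    (hS : IsVC (Dsr r s) S) : r + 1 ≤ #S := by
  have hsurj : Set.SurjOn (vcLabel r s) S (range (r + 1)) := by
    intro k hk
    rw [coe_range, Set.mem_Iio] at hk
    obtain rfl | hk0 := k.eq_zero_or_pos
    · have hedge : (Dsr r s).Adj (.inl ⟨0, by omega⟩) (.inr (.inl ⟨0, hs⟩)) := by simp
      exact hS.exists_mem_eq hedge (by simp [vcLabel]) rfl
    obtain hkr | hkr : k < r ∨ k = r := by omega
    · have hedge :
          (Dsr r s).Adj (.inl ⟨2 * k - 1, by omega⟩) (.inl ⟨2 * k, by omega⟩) := by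
        simp; omega
      exact hS.exists_mem_eq hedge (by simp [vcLabel]; omega) (by simp [vcLabel]; omega)
    · have hedge : (Dsr r s).Adj (.inl ⟨2 * r - 1, by omega⟩) (.inr (.inr ⟨0, hs⟩)) := by
        simp
      exact hS.exists_mem_eq hedge (by simp [vcLabel]; omega) (by simp [vcLabel, hkr])
  simpa using card_le_card_of_surjOn _ hsurj

lemma inl_notMem_or_inl_notMem {S : Finset (Fin (2 * r) ⊕ Fin s ⊕ Fin s)}
    (hS : IsVC (Dsr r s) S) (hI : IsIS (Dsr r s) S) {i j : Fin (2 * r)} (hi : (i : ℕ) = 0)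
    (hj : (j : ℕ) = 2 * r - 1) : .inl i ∉ S ∨ .inl j ∉ S := by
  have hr : 0 < 2 * r := i.pos
  let p (n : ℕ) : Fin (2 * r) ⊕ Fin s ⊕ Fin s := .inl ⟨n % (2 * r), Nat.mod_lt _ hr⟩
  have hp : ∀ n < 2 * r - 1, (Dsr r s).Adj (p n) (p (n + 1)) := fun n hn => by
    simp [p, Nat.mod_eq_of_lt (show n < 2 * r by omega),
      Nat.mod_eq_of_lt (show n + 1 < 2 * r by omega)]
  have hp0 : p 0 = .inl i := by simp [p, Fin.ext_iff, hi]
  have hpj : p (2 * r - 1) = .inl j := by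
    simp [p, Fin.ext_iff, hj, Nat.mod_eq_of_lt (show 2 * r - 1 < 2 * r by omega)]
  have hodd : ¬ Even (2 * r - 1) := Nat.not_even_iff_odd.2 (Nat.odd_iff.2 (by omega))
  have hparity := hS.mem_iff_mem_iff_even hI hp
  rw [hp0, hpj] at hparity
  tauto

lemma le_card_of_isVC_of_isIS (hr : 0 < r) {S : Finset (Fin (2 * r) ⊕ Fin s ⊕ Fin s)}
    (hS : IsVC (Dsr r s) S) (hI : IsIS (Dsr r s) S) : r + s ≤ #S := by
  have hsurj : Set.SurjOn (ivcLabel r s) S (range (r + s)) := by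
    intro k hk
    rw [coe_range, Set.mem_Iio] at hk
    obtain hkr | hkr := lt_or_ge k r
    · have hedge :
          (Dsr r s).Adj (.inl ⟨2 * k, by omega⟩) (.inl ⟨2 * k + 1, by omega⟩) := by simp
      exact hS.exists_mem_eq hedge (by simp [ivcLabel]) (by simp [ivcLabel]; omega)
    let a : Fin s := ⟨k - r, by omega⟩
    have ha : r + (a : ℕ) = k := by simp [a]; omega
    rcases inl_notMem_or_inl_notMem hS hI (i := ⟨0, by omega⟩) (j := ⟨2 * r - 1, by omega⟩)
      rfl rfl with h | h
    · exact ⟨.inr (.inl a), (hS (adj_inl_leaf₁.2 rfl)).resolve_left h, ha⟩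
    · exact ⟨.inr (.inr a), (hS (adj_inl_leaf₂.2 rfl)).resolve_left h, ha⟩
  simpa using card_le_card_of_surjOn _ hsurj

end Dsr

theorem stmt_10 (r s : ℕ) (hr : 1 ≤ r) (hs : 2 ≤ s) :
    vc (Dsr r s) = r + 1 ∧ ivc (Dsr r s) = r + s :=
  ⟨vc_eq_of_le Dsr.isVC_vcCover Dsr.card_vcCover_le fun _ => Dsr.le_card_of_isVC hr (by omega),
    ivc_eq_of_le Dsr.isVC_ivcCover Dsr.isIS_ivcCover Dsr.card_ivcCover_le fun _ =>
      Dsr.le_card_of_isVC_of_isIS hr⟩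
end

section
/- Let r ≥ 1. If G is a near-bipartite graph with no induced K_{1,r}, then ifvs(G) ≤ (2r²−5r+3)·fvs(G). -/
open SimpleGraph

/-- `S` is a feedback vertex set of `G`: removing it leaves a forest. -/
def IsFVS {V : Type*} (G : SimpleGraph V) (S : Finset V) : Prop :=
  (G.induce ((S : Set V)ᶜ)).IsAcyclic

/-- minimum size of a feedback vertex set. -/
noncomputable def fvs {V : Type*} (G : SimpleGraph V) : ℕ :=
  sInf {n | ∃ S : Finset V, IsFVS G S ∧ S.card = n}

/-- minimum size of an independent feedback vertex set. -/
noncomputable def ifvs {V : Type*} (G : SimpleGraph V) : ℕ :=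
  sInf {n | ∃ S : Finset V, IsFVS G S ∧ IsIS G ↑S ∧ S.card = n}

/-- `G` is near-bipartite: it has an independent feedback vertex set. -/
def NearBip {V : Type*} (G : SimpleGraph V) : Prop :=
  ∃ S : Finset V, IsFVS G S ∧ IsIS G ↑S

/-- The star `K_{1,r}`: one centre adjacent to `r` leaves. -/
def starG (r : ℕ) : SimpleGraph (Unit ⊕ Fin r) :=
  SimpleGraph.fromRel fun u v => ∃ i : Fin r, u = Sum.inl () ∧ v = Sum.inr i

namespace IFVSAux

variable {V : Type*}

/-- restriction of `G` to a vertex set `t`, as a spanning subgraph of `G`. -/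
def Gr (G : SimpleGraph V) (t : Set V) : SimpleGraph V where
  Adj a b := G.Adj a b ∧ a ∈ t ∧ b ∈ t
  symm := ⟨fun a b (h : G.Adj a b ∧ a ∈ t ∧ b ∈ t) => ⟨h.1.symm, h.2.2, h.2.1⟩⟩
  loopless := ⟨fun a (h : G.Adj a a ∧ a ∈ t ∧ a ∈ t) => G.irrefl h.1⟩

lemma Gr_adj {G : SimpleGraph V} {t : Set V} {a b : V} :
    (Gr G t).Adj a b ↔ G.Adj a b ∧ a ∈ t ∧ b ∈ t := Iff.rfl

noncomputable def eN (H : SimpleGraph V) : ℕ := H.edgeSet.ncard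

noncomputable def cN (H : SimpleGraph V) : ℕ := Nat.card H.ConnectedComponent

noncomputable def dN (H : SimpleGraph V) (v : V) : ℕ := (H.neighborSet v).ncard

/-- helper: build a cycle from a path plus a vertex adjacent to both ends. -/
lemma cycle_of_path {H : SimpleGraph V} {u x y : V} (hux : H.Adj u x) (hyu : H.Adj y u)
    (hxy : x ≠ y) (q : H.Walk x y) (hq : q.IsPath) (hu : u ∉ q.support) :
    ∃ c : H.Walk u u, c.IsCycle := by
  refine ⟨Walk.cons hux (q.concat hyu), ?_⟩
  rw [Walk.cons_isCycle_iff]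
  constructor
  · rw [Walk.isPath_def, Walk.support_concat]
    rw [Walk.isPath_def] at hq
    simp only [List.concat_eq_append, List.nodup_append, hq, List.nodup_cons, List.nodup_nil,
      and_true, true_and, List.not_mem_nil, not_false_iff]
    intro a ha; simp only [List.mem_singleton]
    rintro _ rfl rfl; exact hu ha
  · intro hmem
    rw [Walk.edges_concat] at hmem
    rw [List.concat_eq_append, List.mem_append] at hmem
    rcases hmem with h | h
    · exact hu (q.fst_mem_support_of_mem_edges h)
    · rw [List.mem_singleton] at h
      rcases Sym2.eq_iff.mp h with ⟨h1, h2⟩ | ⟨h1, h2⟩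
      · exact hux.ne (h2.symm)
      · exact hxy h2

lemma acyclic_of_le {H H' : SimpleGraph V} (hle : ∀ a b, H'.Adj a b → H.Adj a b)
    (hH : H.IsAcyclic) : H'.IsAcyclic := by
  intro v c hc
  have hsub : ∀ e ∈ c.edges, e ∈ H.edgeSet := by
    intro e he
    have := c.edges_subset_edgeSet he
    revert this
    refine e.ind (fun a b => ?_)
    intro h; exact hle a b h
  exact hH (c.transfer H hsub) (hc.transfer hsub)

end IFVSAux

namespace IFVSAux

variable {V : Type*} {H H' : SimpleGraph V} {u : V}

/-- walks avoiding `u` transfer to the deleted graph -/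
lemma P1 (hdel : ∀ a b : V, H'.Adj a b ↔ H.Adj a b ∧ a ≠ u ∧ b ≠ u)
    {a b : V} (p : H.Walk a b) (hu : u ∉ p.support) : H'.Reachable a b := by
  induction p with
  | nil => exact Reachable.refl _
  | @cons x y z h q ih =>
    rw [Walk.support_cons, List.mem_cons] at hu
    push_neg at hu
    have hy : y ∈ q.support := q.start_mem_support
    have hadj : H'.Adj x y := (hdel x y).mpr ⟨h, fun e => hu.1 e.symm, fun e => hu.2 (e ▸ hy)⟩
    exact hadj.reachable.trans (ih hu.2)

lemma P2 (hdel : ∀ a b : V, H'.Adj a b ↔ H.Adj a b ∧ a ≠ u ∧ b ≠ u)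
    {a b : V} (p : H.Walk a b) (hb : b = u) (ha : a ≠ u) :
    ∃ x, H.Adj x u ∧ H'.Reachable a x := by
  induction p with
  | nil => exact absurd hb ha
  | @cons x y z h q ih =>
    by_cases hy : y = u
    · exact ⟨x, hy ▸ h, Reachable.refl _⟩
    · obtain ⟨w, hw, hr⟩ := ih hb hy
      have hadj : H'.Adj x y := (hdel x y).mpr ⟨h, ha, hy⟩
      exact ⟨w, hw, hadj.reachable.trans hr⟩

lemma P5w (hdel : ∀ a b : V, H'.Adj a b ↔ H.Adj a b ∧ a ≠ u ∧ b ≠ u)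
    {a b : V} (p : H'.Walk a b) (ha : a = u) : a = b := by
  cases p with
  | nil => rfl
  | cons h q => exact absurd ha (fun e => ((hdel _ _).mp h).2.1 e)

lemma P5c (hdel : ∀ a b : V, H'.Adj a b ↔ H.Adj a b ∧ a ≠ u ∧ b ≠ u)
    {z : V} (h : H'.connectedComponentMk z = H'.connectedComponentMk u) : z = u := by
  have hr : H'.Reachable u z := (ConnectedComponent.eq.mp h).symm
  exact (hr.elim fun p => (P5w hdel p rfl)).symm

/-- the map on connected components induced by deletion -/
noncomputable def fdel (hdel : ∀ a b : V, H'.Adj a b ↔ H.Adj a b ∧ a ≠ u ∧ b ≠ u) :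
    H'.ConnectedComponent → H.ConnectedComponent :=
  ConnectedComponent.map ⟨id, fun h => ((hdel _ _).mp h).1⟩

lemma fdel_mk (hdel : ∀ a b : V, H'.Adj a b ↔ H.Adj a b ∧ a ≠ u ∧ b ≠ u) (v : V) :
    fdel hdel (H'.connectedComponentMk v) = H.connectedComponentMk v := rfl

lemma P3 (hdel : ∀ a b : V, H'.Adj a b ↔ H.Adj a b ∧ a ≠ u ∧ b ≠ u)
    (A B : H'.ConnectedComponent) (hAB : fdel hdel A = fdel hdel B)
    (hne : fdel hdel A ≠ H.connectedComponentMk u) : A = B := by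
  classical
  obtain ⟨a, ha⟩ := A.exists_rep
  obtain ⟨b, hb⟩ := B.exists_rep
  subst ha hb
  have hAB' : H.connectedComponentMk a = H.connectedComponentMk b := hAB
  have hne' : H.connectedComponentMk a ≠ H.connectedComponentMk u := hne
  have hr : H.Reachable a b := ConnectedComponent.eq.mp hAB'
  refine hr.elim fun p => ?_
  by_cases hu : u ∈ p.support
  · exact absurd (ConnectedComponent.eq.mpr (p.takeUntil u hu).reachable) hne'
  · exact ConnectedComponent.eq.mpr (P1 hdel p hu)

lemma P4 (hdel : ∀ a b : V, H'.Adj a b ↔ H.Adj a b ∧ a ≠ u ∧ b ≠ u)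
    (A : H'.ConnectedComponent) (h1 : fdel hdel A = H.connectedComponentMk u)
    (h2 : A ≠ H'.connectedComponentMk u) :
    ∃ x, H.Adj x u ∧ A = H'.connectedComponentMk x := by
  obtain ⟨a, ha⟩ := A.exists_rep
  subst ha
  have h1' : H.connectedComponentMk a = H.connectedComponentMk u := h1
  have hau : a ≠ u := fun e => h2 (by rw [e]; rfl)
  have hr : H.Reachable a u := ConnectedComponent.eq.mp h1'
  refine hr.elim fun p => ?_
  obtain ⟨x, hx, hr'⟩ := P2 hdel p rfl hau
  exact ⟨x, hx, ConnectedComponent.eq.mpr hr'⟩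

end IFVSAux

namespace IFVSAux

variable {V : Type*} [Fintype V] {H H' : SimpleGraph V} {u : V}

omit [Fintype V] in
lemma edges_sub (hle : ∀ a b : V, H'.Adj a b → H.Adj a b) {a b : V} (p : H'.Walk a b) :
    ∀ e ∈ p.edges, e ∈ H.edgeSet := by
  intro e he
  have h := p.edges_subset_edgeSet he
  revert h
  refine e.ind fun x y => ?_
  exact hle x y

lemma card1 (hdel : ∀ a b : V, H'.Adj a b ↔ H.Adj a b ∧ a ≠ u ∧ b ≠ u) :
    cN H' ≤ cN H + dN H u := by
  classical
  have hex : ∀ (A : H'.ConnectedComponent),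
      fdel hdel A = H.connectedComponentMk u → A ≠ H'.connectedComponentMk u →
      ∃ z, z ∈ H.neighborSet u ∧ A = H'.connectedComponentMk z := by
    intro A h1 h2
    obtain ⟨z, hz, hA⟩ := P4 hdel A h1 h2
    exact ⟨z, hz.symm, hA⟩
  set F : H'.ConnectedComponent → H.ConnectedComponent ⊕ ↥(H.neighborSet u) := fun A =>
    if h : fdel hdel A = H.connectedComponentMk u ∧ A ≠ H'.connectedComponentMk u then
      Sum.inr ⟨(hex A h.1 h.2).choose, (hex A h.1 h.2).choose_spec.1⟩
    else Sum.inl (fdel hdel A) with hF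
  have hinj : Function.Injective F := by
    intro A B h
    simp only [hF] at h
    by_cases hA : fdel hdel A = H.connectedComponentMk u ∧ A ≠ H'.connectedComponentMk u <;>
      by_cases hB : fdel hdel B = H.connectedComponentMk u ∧ B ≠ H'.connectedComponentMk u
    · rw [dif_pos hA, dif_pos hB] at h
      have hv : ((hex A hA.1 hA.2).choose) = ((hex B hB.1 hB.2).choose) :=
        congrArg Subtype.val (Sum.inr_injective h)
      rw [(hex A hA.1 hA.2).choose_spec.2, (hex B hB.1 hB.2).choose_spec.2, hv]
    · rw [dif_pos hA, dif_neg hB] at h; simp at h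
    · rw [dif_neg hA, dif_pos hB] at h; simp at h
    · rw [dif_neg hA, dif_neg hB] at h
      have hfe : fdel hdel A = fdel hdel B := Sum.inl_injective h
      by_cases hu : fdel hdel A = H.connectedComponentMk u
      · have hA' : A = H'.connectedComponentMk u := by by_contra hc; exact hA ⟨hu, hc⟩
        have hB' : B = H'.connectedComponentMk u := by by_contra hc; exact hB ⟨hfe ▸ hu, hc⟩
        rw [hA', hB']
      · exact P3 hdel A B hfe hu
  calc cN H' = Nat.card H'.ConnectedComponent := rfl
    _ ≤ Nat.card (H.ConnectedComponent ⊕ ↥(H.neighborSet u)) :=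
        Nat.card_le_card_of_injective F hinj
    _ = cN H + dN H u := by
        rw [Nat.card_sum, Nat.card_coe_set_eq]; rfl

lemma card2 (hdel : ∀ a b : V, H'.Adj a b ↔ H.Adj a b ∧ a ≠ u ∧ b ≠ u)
    {x y : V} (hx : H.Adj x u) (hy : H.Adj y u) (hxy : x ≠ y) (hr : H'.Reachable x y) :
    cN H' ≤ cN H + (dN H u - 1) := by
  classical
  have hyn : y ∈ H.neighborSet u := hy.symm
  have hex : ∀ (A : H'.ConnectedComponent),
      fdel hdel A = H.connectedComponentMk u → A ≠ H'.connectedComponentMk u →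
      ∃ z, z ∈ H.neighborSet u \ {y} ∧ A = H'.connectedComponentMk z := by
    intro A h1 h2
    obtain ⟨z, hz, hA⟩ := P4 hdel A h1 h2
    by_cases hzy : z = y
    · refine ⟨x, ⟨hx.symm, hxy⟩, ?_⟩
      rw [hA, hzy]
      exact (ConnectedComponent.eq.mpr hr).symm
    · exact ⟨z, ⟨hz.symm, hzy⟩, hA⟩
  set F : H'.ConnectedComponent → H.ConnectedComponent ⊕ ↥(H.neighborSet u \ {y}) := fun A =>
    if h : fdel hdel A = H.connectedComponentMk u ∧ A ≠ H'.connectedComponentMk u then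
      Sum.inr ⟨(hex A h.1 h.2).choose, (hex A h.1 h.2).choose_spec.1⟩
    else Sum.inl (fdel hdel A) with hF
  have hinj : Function.Injective F := by
    intro A B h
    simp only [hF] at h
    by_cases hA : fdel hdel A = H.connectedComponentMk u ∧ A ≠ H'.connectedComponentMk u <;>
      by_cases hB : fdel hdel B = H.connectedComponentMk u ∧ B ≠ H'.connectedComponentMk u
    · rw [dif_pos hA, dif_pos hB] at h
      have hv : ((hex A hA.1 hA.2).choose) = ((hex B hB.1 hB.2).choose) :=
        congrArg Subtype.val (Sum.inr_injective h)
      rw [(hex A hA.1 hA.2).choose_spec.2, (hex B hB.1 hB.2).choose_spec.2, hv]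
    · rw [dif_pos hA, dif_neg hB] at h; simp at h
    · rw [dif_neg hA, dif_pos hB] at h; simp at h
    · rw [dif_neg hA, dif_neg hB] at h
      have hfe : fdel hdel A = fdel hdel B := Sum.inl_injective h
      by_cases hu : fdel hdel A = H.connectedComponentMk u
      · have hA' : A = H'.connectedComponentMk u := by by_contra hc; exact hA ⟨hu, hc⟩
        have hB' : B = H'.connectedComponentMk u := by by_contra hc; exact hB ⟨hfe ▸ hu, hc⟩
        rw [hA', hB']
      · exact P3 hdel A B hfe hu
  calc cN H' = Nat.card H'.ConnectedComponent := rfl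
    _ ≤ Nat.card (H.ConnectedComponent ⊕ ↥(H.neighborSet u \ {y})) :=
        Nat.card_le_card_of_injective F hinj
    _ = cN H + (dN H u - 1) := by
        rw [Nat.card_sum, Nat.card_coe_set_eq, Set.ncard_diff_singleton_of_mem hyn]; rfl

lemma card3 (hdel : ∀ a b : V, H'.Adj a b ↔ H.Adj a b ∧ a ≠ u ∧ b ≠ u)
    {x : V} (hx : H.Adj x u) : cN H + 1 ≤ cN H' := by
  classical
  have wspec : ∀ C : H.ConnectedComponent, H.connectedComponentMk C.exists_rep.choose = C :=
    fun C => C.exists_rep.choose_spec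
  set j : H.ConnectedComponent ⊕ Unit → H'.ConnectedComponent := Sum.elim
    (fun C => H'.connectedComponentMk
      (if C = H.connectedComponentMk u then x else C.exists_rep.choose))
    (fun _ => H'.connectedComponentMk u) with hj
  have hinj : Function.Injective j := by
    rintro (C | _) (D | _) h <;> simp only [hj, Sum.elim_inl, Sum.elim_inr] at h
    · have hf := congrArg (fdel hdel) h
      rw [fdel_mk, fdel_mk] at hf
      by_cases hC : C = H.connectedComponentMk u <;> by_cases hD : D = H.connectedComponentMk u
      · exact congrArg _ (hC.trans hD.symm)
      · exfalso
        rw [if_pos hC, if_neg hD] at hf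
        exact hD (by rw [← wspec D, ← hf]; exact ConnectedComponent.eq.mpr hx.reachable)
      · exfalso
        rw [if_neg hC, if_pos hD] at hf
        exact hC (by rw [← wspec C, hf]; exact ConnectedComponent.eq.mpr hx.reachable)
      · rw [if_neg hC, if_neg hD] at hf
        exact congrArg _ (by rw [← wspec C, ← wspec D, hf])
    · exfalso
      have hz := P5c hdel h
      by_cases hC : C = H.connectedComponentMk u
      · rw [if_pos hC] at hz; exact hx.ne hz
      · rw [if_neg hC] at hz; exact hC (by rw [← wspec C, hz])
    · exfalso
      have hz := P5c hdel h.symm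
      by_cases hD : D = H.connectedComponentMk u
      · rw [if_pos hD] at hz; exact hx.ne hz
      · rw [if_neg hD] at hz; exact hD (by rw [← wspec D, hz])
    · rfl
  calc cN H + 1 = Nat.card (H.ConnectedComponent ⊕ Unit) := by
        rw [Nat.card_sum]; simp [cN]
    _ ≤ Nat.card H'.ConnectedComponent := Nat.card_le_card_of_injective j hinj
    _ = cN H' := rfl

end IFVSAux

namespace IFVSAux

variable {V : Type*} [Fintype V] {H H' : SimpleGraph V} {u : V}

lemma card4 (hdel : ∀ a b : V, H'.Adj a b ↔ H.Adj a b ∧ a ≠ u ∧ b ≠ u)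
    (hac : H.IsAcyclic) : cN H + dN H u ≤ cN H' := by
  classical
  have wspec : ∀ C : H.ConnectedComponent, H.connectedComponentMk C.exists_rep.choose = C :=
    fun C => C.exists_rep.choose_spec
  have husup : ∀ {a b : V} (w : H'.Walk a b), a ≠ u → b ≠ u → u ∉ w.support := by
    intro a b w ha _ hu
    have hr : H'.Reachable a u := (w.takeUntil u hu).reachable
    exact ha (hr.symm.elim fun q => (P5w hdel q rfl)).symm
  set j : H.ConnectedComponent ⊕ ↥(H.neighborSet u) → H'.ConnectedComponent := Sum.elim
    (fun C => H'.connectedComponentMk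
      (if C = H.connectedComponentMk u then u else C.exists_rep.choose))
    (fun x => H'.connectedComponentMk x.val) with hj
  have hinj : Function.Injective j := by
    rintro (C | x) (D | x') h <;> simp only [hj, Sum.elim_inl, Sum.elim_inr] at h
    · have hf := congrArg (fdel hdel) h
      rw [fdel_mk, fdel_mk] at hf
      by_cases hC : C = H.connectedComponentMk u <;> by_cases hD : D = H.connectedComponentMk u
      · exact congrArg _ (hC.trans hD.symm)
      · exfalso
        rw [if_pos hC, if_neg hD] at hf
        exact hD (by rw [← wspec D, ← hf])
      · exfalso
        rw [if_neg hC, if_pos hD] at hf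
        exact hC (by rw [← wspec C, hf])
      · rw [if_neg hC, if_neg hD] at hf
        exact congrArg _ (by rw [← wspec C, ← wspec D, hf])
    · exfalso
      have hux : H.Adj u x'.val := x'.2
      by_cases hC : C = H.connectedComponentMk u
      · rw [if_pos hC] at h
        have he : x'.val = u := P5c hdel h.symm
        rw [he] at hux
        exact H.loopless.irrefl u hux
      · rw [if_neg hC] at h
        have hf := congrArg (fdel hdel) h
        rw [fdel_mk, fdel_mk] at hf
        exact hC (by rw [← wspec C, hf]; exact ConnectedComponent.eq.mpr hux.symm.reachable)
    · exfalso
      have hux : H.Adj u x.val := x.2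
      by_cases hD : D = H.connectedComponentMk u
      · rw [if_pos hD] at h
        have he : x.val = u := P5c hdel h
        rw [he] at hux
        exact H.loopless.irrefl u hux
      · rw [if_neg hD] at h
        have hf := congrArg (fdel hdel) h
        rw [fdel_mk, fdel_mk] at hf
        exact hD (by rw [← wspec D, ← hf]; exact ConnectedComponent.eq.mpr hux.symm.reachable)
    · have hvals : x.val = x'.val := by
        by_contra hne
        have hr : H'.Reachable x.val x'.val := ConnectedComponent.eq.mp h
        refine hr.elim fun p => ?_
        have hxu : x.val ≠ u := by
          intro e
          have := x.2
          rw [e] at this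
          exact H.loopless.irrefl u this
        have hx'u : x'.val ≠ u := by
          intro e
          have := x'.2
          rw [e] at this
          exact H.loopless.irrefl u this
        have hu : u ∉ p.bypass.support := husup p.bypass hxu hx'u
        have hsub := edges_sub (fun a b hab => ((hdel a b).mp hab).1) p.bypass
        have hq : ((p.bypass).transfer H hsub).IsPath := (p.bypass_isPath).transfer hsub
        have hu2 : u ∉ ((p.bypass).transfer H hsub).support := by
          rwa [Walk.support_transfer]
        obtain ⟨c, hc⟩ := cycle_of_path x.2 x'.2.symm hne ((p.bypass).transfer H hsub) hq hu2
        exact hac c hc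
      exact congrArg _ (Subtype.ext hvals)
  calc cN H + dN H u = Nat.card (H.ConnectedComponent ⊕ ↥(H.neighborSet u)) := by
        rw [Nat.card_sum, Nat.card_coe_set_eq]; rfl
    _ ≤ Nat.card H'.ConnectedComponent := Nat.card_le_card_of_injective j hinj
    _ = cN H' := rfl

lemma edge_del (hdel : ∀ a b : V, H'.Adj a b ↔ H.Adj a b ∧ a ≠ u ∧ b ≠ u) :
    eN H' + dN H u = eN H := by
  classical
  have h1 : H'.edgeSet = H.edgeSet \ {e | u ∈ e} := by
    ext e
    refine e.ind fun a b => ?_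
    simp only [mem_edgeSet, Set.mem_diff, Set.mem_setOf_eq, Sym2.mem_iff, hdel a b]
    constructor
    · rintro ⟨h, ha, hb⟩
      refine ⟨h, ?_⟩
      rintro (rfl | rfl)
      · exact ha rfl
      · exact hb rfl
    · rintro ⟨h, hm⟩
      push_neg at hm
      exact ⟨h, fun e => hm.1 e.symm, fun e => hm.2 e.symm⟩
  have h2 : H.edgeSet ∩ {e | u ∈ e} = (fun x => s(u, x)) '' (H.neighborSet u) := by
    ext e
    refine e.ind fun a b => ?_
    simp only [Set.mem_inter_iff, mem_edgeSet, Set.mem_setOf_eq, Sym2.mem_iff, Set.mem_image,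
      mem_neighborSet]
    constructor
    · rintro ⟨h, (rfl | rfl)⟩
      · exact ⟨b, h, rfl⟩
      · exact ⟨a, h.symm, Sym2.eq_swap⟩
    · rintro ⟨x, hx, he⟩
      rcases Sym2.eq_iff.mp he with ⟨h1', h2'⟩ | ⟨h1', h2'⟩
      · subst h1'; subst h2'; exact ⟨hx, Or.inl rfl⟩
      · subst h1'; subst h2'; exact ⟨hx.symm, Or.inr rfl⟩
  have h3 : ((fun x => s(u, x)) '' (H.neighborSet u)).ncard = dN H u := by
    apply Set.ncard_image_of_injOn
    intro a ha b hb he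
    rcases Sym2.eq_iff.mp he with ⟨_, h⟩ | ⟨h1', h2'⟩
    · exact h
    · exfalso; exact H.loopless.irrefl u (h2' ▸ ha)
  have h4 := Set.ncard_inter_add_ncard_diff_eq_ncard H.edgeSet {e | u ∈ e}
  show H'.edgeSet.ncard + dN H u = H.edgeSet.ncard
  rw [h1, ← h3, ← h2]
  omega

end IFVSAux

namespace IFVSAux

variable {V : Type*} [Fintype V]

/-- vertex deletion as a graph on the same vertex set -/
def delV (H : SimpleGraph V) (u : V) : SimpleGraph V where
  Adj a b := H.Adj a b ∧ a ≠ u ∧ b ≠ u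
  symm := ⟨fun a b (h : H.Adj a b ∧ a ≠ u ∧ b ≠ u) => ⟨h.1.symm, h.2.2, h.2.1⟩⟩
  loopless := ⟨fun a (h : H.Adj a a ∧ a ≠ u ∧ a ≠ u) => H.irrefl h.1⟩

lemma delV_hdel (H : SimpleGraph V) (u : V) :
    ∀ a b : V, (delV H u).Adj a b ↔ H.Adj a b ∧ a ≠ u ∧ b ≠ u := fun _ _ => Iff.rfl

lemma cN_eq_of_no_edges {H : SimpleGraph V} (h0 : eN H = 0) : cN H = Nat.card V := by
  have hempty : H.edgeSet = ∅ := by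
    rw [eN] at h0
    exact (Set.ncard_eq_zero (Set.toFinite _)).mp h0
  have hnoadj : ∀ a b : V, ¬H.Adj a b := by
    intro a b hab
    have : s(a, b) ∈ H.edgeSet := hab
    rw [hempty] at this
    exact this
  have hbij : Function.Bijective (H.connectedComponentMk) := by
    constructor
    · intro a b hab
      have hr : H.Reachable a b := ConnectedComponent.eq.mp hab
      refine hr.elim fun p => ?_
      cases p with
      | nil => rfl
      | cons h q => exact absurd h (hnoadj _ _)
    · intro C
      obtain ⟨v, hv⟩ := C.exists_rep
      exact ⟨v, hv⟩
  exact (Nat.card_eq_of_bijective _ hbij).symm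

lemma forest_count : ∀ (m : ℕ) (H : SimpleGraph V), eN H = m → H.IsAcyclic →
    eN H + cN H = Nat.card V := by
  intro m
  induction m using Nat.strong_induction_on with
  | _ m ih =>
    intro H hm hac
    by_cases h0 : eN H = 0
    · rw [h0, cN_eq_of_no_edges h0, zero_add]
    · obtain ⟨e, he⟩ := Set.nonempty_of_ncard_ne_zero h0
      revert he
      refine e.ind fun a b => ?_
      intro he
      have hadj : H.Adj a b := he
      have hdel := delV_hdel H a
      have hd : 1 ≤ dN H a := by
        have : 0 < (H.neighborSet a).ncard := (Set.ncard_pos (Set.toFinite _)).mpr ⟨b, hadj⟩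
        exact this
      have hE := edge_del hdel
      have hac' : (delV H a).IsAcyclic := acyclic_of_le (fun x y h => h.1) hac
      have hlt : eN (delV H a) < m := by omega
      have hrec := ih _ hlt (delV H a) rfl hac'
      have hc1 := card1 hdel
      have hc4 := card4 hdel hac
      omega

lemma Gr_del {G : SimpleGraph V} (s : Set V) (u : V) :
    ∀ a b : V, (Gr G (s \ {u})).Adj a b ↔ (Gr G s).Adj a b ∧ a ≠ u ∧ b ≠ u := by
  intro a b
  simp only [Gr_adj, Set.mem_diff, Set.mem_singleton_iff]
  tauto

end IFVSAux

namespace IFVSAux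

variable {V : Type*} [Fintype V] {G : SimpleGraph V}

omit [Fintype V] in
lemma cycle_extract {H : SimpleGraph V} {v u : V} (c : H.Walk v v) (hc : c.IsCycle)
    (hu : u ∈ c.support) :
    ∃ (x y : V) (t : H.Walk y x), H.Adj u x ∧ H.Adj u y ∧ x ≠ y ∧ u ∉ t.support := by
  classical
  have hc' : (c.rotate u hu).IsCycle := hc.rotate hu
  cases hceq : c.rotate u hu with
  | nil =>
    rw [hceq] at hc'
    exact absurd rfl hc'.ne_nil
  | @cons _ x _ hadj q =>
    rw [hceq] at hc'
    have hlen := hc'.three_le_length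
    rw [Walk.cons_isCycle_iff] at hc'
    have hqrev : q.reverse.IsPath := hc'.1.reverse
    cases hrev : q.reverse with
    | nil =>
      exfalso
      have h0 : q.reverse.length = 0 := by rw [hrev]; rfl
      rw [Walk.length_reverse] at h0
      simp only [Walk.length_cons] at hlen
      omega
    | @cons _ y _ hadj2 t =>
      rw [hrev] at hqrev
      rw [Walk.cons_isPath_iff] at hqrev
      refine ⟨x, y, t, hadj, hadj2, ?_, hqrev.2⟩
      intro heq
      subst heq
      have ht : t = Walk.nil := by
        have := SimpleGraph.Path.loop_eq (⟨t, hqrev.1⟩ : H.Path x x)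
        exact congrArg Subtype.val this
      have hql : q.length = 1 := by
        have := congrArg Walk.length hrev
        rw [Walk.length_reverse] at this
        rw [this, ht]
        rfl
      simp only [Walk.length_cons, hql] at hlen
      omega

lemma lemA : ∀ (m : ℕ) (s I : Finset V), s.card = m → I ⊆ s → IsIS G ↑I →
    (Gr G (↑s \ ↑I)).IsAcyclic →
    ∃ W : Finset V, W ⊆ I ∧ (Gr G (↑s \ ↑W)).IsAcyclic ∧
      W.card + Nat.card V ≤ eN (Gr G ↑s) + cN (Gr G ↑s) := by
  intro m
  induction m using Nat.strong_induction_on with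
  | _ m ih =>
    intro s I hcard hsub hIS hac
    classical
    by_cases hacy : (Gr G ↑s).IsAcyclic
    · refine ⟨∅, Finset.empty_subset _, ?_, ?_⟩
      · have hseq : (↑s \ ↑(∅ : Finset V) : Set V) = ↑s := by simp
        rw [hseq]
        exact hacy
      · simp only [Finset.card_empty, zero_add]
        have := forest_count (eN (Gr G ↑s)) _ rfl hacy
        omega
    · rw [IsAcyclic] at hacy
      push_neg at hacy
      obtain ⟨v, c, hc⟩ := hacy
      have hfind : ∃ u ∈ c.support, u ∈ I := by
        by_contra hn'
        push_neg at hn'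
        have hsubE : ∀ e ∈ c.edges, e ∈ (Gr G (↑s \ ↑I)).edgeSet := by
          intro e he
          revert he
          refine e.ind fun a b => ?_
          intro he
          have hadj := c.edges_subset_edgeSet he
          have ha := c.fst_mem_support_of_mem_edges he
          have hb := c.snd_mem_support_of_mem_edges he
          rw [mem_edgeSet, Gr_adj] at hadj
          rw [mem_edgeSet, Gr_adj]
          exact ⟨hadj.1, ⟨hadj.2.1, fun hm => hn' a ha (Finset.mem_coe.mp hm)⟩,
            ⟨hadj.2.2, fun hm => hn' b hb (Finset.mem_coe.mp hm)⟩⟩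
        exact hac (c.transfer _ hsubE) (hc.transfer hsubE)
      obtain ⟨u, hus, huI⟩ := hfind
      obtain ⟨x, y, t, hux, huy, hxy, hut⟩ := cycle_extract c hc hus
      have hu_s : u ∈ s := Finset.mem_coe.mp (Gr_adj.mp hux).2.1
      have hset : (↑(s.erase u) : Set V) = ↑s \ {u} := Finset.coe_erase u s
      have hdel' : ∀ a b : V, (Gr G ↑(s.erase u)).Adj a b ↔
          (Gr G ↑s).Adj a b ∧ a ≠ u ∧ b ≠ u := by
        intro a b
        rw [hset]
        exact Gr_del (↑s : Set V) u a b
      have hseteq : (↑(s.erase u) \ ↑(I.erase u) : Set V) = ↑s \ ↑I := by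
        ext a
        simp only [Finset.coe_erase, Set.mem_diff, Set.mem_singleton_iff, Finset.mem_coe]
        constructor
        · rintro ⟨⟨has, hau⟩, hnot⟩
          exact ⟨has, fun haI => hnot ⟨haI, hau⟩⟩
        · rintro ⟨has, hnI⟩
          exact ⟨⟨has, fun e => hnI (e ▸ huI)⟩, fun hx' => hnI hx'.1⟩
      have hacI' : (Gr G (↑(s.erase u) \ ↑(I.erase u))).IsAcyclic := by
        rw [hseteq]; exact hac
      have hcard' : (s.erase u).card < m := by
        rw [← hcard]; exact Finset.card_erase_lt_of_mem hu_s
      have hIS' : IsIS G ↑(I.erase u) :=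
        hIS.mono (Finset.coe_subset.mpr (Finset.erase_subset u I))
      obtain ⟨W', hW'sub, hW'ac, hW'card⟩ :=
        ih _ hcard' (s.erase u) (I.erase u) rfl (Finset.erase_subset_erase u hsub) hIS' hacI'
      refine ⟨insert u W', ?_, ?_, ?_⟩
      · intro a ha
        rcases Finset.mem_insert.mp ha with rfl | ha'
        · exact huI
        · exact (Finset.erase_subset u I) (hW'sub ha')
      · have hset2 : (↑s \ ↑(insert u W') : Set V) = ↑(s.erase u) \ ↑W' := by
          ext a
          simp only [Finset.coe_insert, Finset.coe_erase, Set.mem_diff, Set.mem_insert_iff,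
            Set.mem_singleton_iff, Finset.mem_coe]
          tauto
        rw [hset2]
        exact hW'ac
      · have hnotmem : u ∉ W' := fun h => (Finset.notMem_erase u I) (hW'sub h)
        rw [Finset.card_insert_of_notMem hnotmem]
        have hreach : (Gr G ↑(s.erase u)).Reachable y x := P1 hdel' t hut
        have hc2 := card2 hdel' hux.symm huy.symm hxy hreach.symm
        have hE := edge_del hdel'
        have hd1 : 1 ≤ dN (Gr G ↑s) u := by
          have : 0 < ((Gr G ↑s).neighborSet u).ncard :=
            (Set.ncard_pos (Set.toFinite _)).mpr ⟨x, hux⟩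
          exact this
        omega

lemma lemB : ∀ (m : ℕ) (S s : Finset V), S.card = m → S ⊆ s →
    (Gr G (↑s \ ↑S)).IsAcyclic →
    eN (Gr G ↑s) + cN (Gr G ↑s) ≤ Nat.card V + ∑ v ∈ S, ((G.neighborSet v).ncard - 1) := by
  intro m
  induction m using Nat.strong_induction_on with
  | _ m ih =>
    intro S s hcard hsub hac
    classical
    rcases Finset.eq_empty_or_nonempty S with rfl | ⟨v, hv⟩
    · have hseq : (↑s \ ↑(∅ : Finset V) : Set V) = ↑s := by simp
      rw [hseq] at hac
      have := forest_count (eN (Gr G ↑s)) _ rfl hac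
      simp only [Finset.sum_empty]
      omega
    · have hvs : v ∈ s := hsub hv
      have hset : (↑(s.erase v) : Set V) = ↑s \ {v} := Finset.coe_erase v s
      have hdel' : ∀ a b : V, (Gr G ↑(s.erase v)).Adj a b ↔
          (Gr G ↑s).Adj a b ∧ a ≠ v ∧ b ≠ v := by
        intro a b
        rw [hset]
        exact Gr_del (↑s : Set V) v a b
      have hseteq : (↑(s.erase v) \ ↑(S.erase v) : Set V) = ↑s \ ↑S := by
        ext a
        simp only [Finset.coe_erase, Set.mem_diff, Set.mem_singleton_iff, Finset.mem_coe]
        constructor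
        · rintro ⟨⟨has, hau⟩, hnot⟩
          exact ⟨has, fun haI => hnot ⟨haI, hau⟩⟩
        · rintro ⟨has, hnI⟩
          exact ⟨⟨has, fun e => hnI (e ▸ hv)⟩, fun hx' => hnI hx'.1⟩
      have hac' : (Gr G (↑(s.erase v) \ ↑(S.erase v))).IsAcyclic := by
        rw [hseteq]; exact hac
      have hcard' : (S.erase v).card < m := by
        rw [← hcard]; exact Finset.card_erase_lt_of_mem hv
      have hrec := ih _ hcard' (S.erase v) (s.erase v) rfl
        (Finset.erase_subset_erase v hsub) hac'
      have hsplit : ∑ w ∈ S, ((G.neighborSet w).ncard - 1) =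
          ((G.neighborSet v).ncard - 1) + ∑ w ∈ S.erase v, ((G.neighborSet w).ncard - 1) :=
        (Finset.add_sum_erase S _ hv).symm
      have hdle : dN (Gr G ↑s) v ≤ (G.neighborSet v).ncard := by
        apply Set.ncard_le_ncard _ (Set.toFinite _)
        intro z hz
        exact (Gr_adj.mp hz).1
      by_cases hd0 : dN (Gr G ↑s) v = 0
      · have hempty : ((Gr G ↑s).neighborSet v) = ∅ :=
          (Set.ncard_eq_zero (Set.toFinite _)).mp hd0
        have hgeq : Gr G ↑(s.erase v) = Gr G ↑s := by
          ext a b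
          rw [hdel' a b]
          constructor
          · exact fun h => h.1
          · intro h
            refine ⟨h, ?_, ?_⟩
            · rintro rfl
              have : b ∈ (Gr G ↑s).neighborSet a := h
              rw [hempty] at this
              exact this
            · rintro rfl
              have : a ∈ (Gr G ↑s).neighborSet b := h.symm
              rw [hempty] at this
              exact this
        rw [← hgeq]
        refine le_trans hrec ?_
        have hmono : ∑ w ∈ S.erase v, ((G.neighborSet w).ncard - 1) ≤
            ∑ w ∈ S, ((G.neighborSet w).ncard - 1) :=
          Finset.sum_le_sum_of_subset (Finset.erase_subset v S)
        omega
      · have hpos : 0 < dN (Gr G ↑s) v := Nat.pos_of_ne_zero hd0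
        obtain ⟨x, hx⟩ : ((Gr G ↑s).neighborSet v).Nonempty :=
          (Set.ncard_pos (Set.toFinite _)).mp hpos
        have hc3 : cN (Gr G ↑s) + 1 ≤ cN (Gr G ↑(s.erase v)) :=
          card3 hdel' (hx : (Gr G ↑s).Adj v x).symm
        have hE : eN (Gr G ↑(s.erase v)) + dN (Gr G ↑s) v = eN (Gr G ↑s) := edge_del hdel'
        omega

end IFVSAux

namespace IFVSAux

variable {V : Type*} {G : SimpleGraph V}

lemma liftW {t : Set V} : ∀ {a b : V} (p : (Gr G t).Walk a b) (ha : a ∈ t) (hb : b ∈ t),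
    ∃ q : (G.induce t).Walk ⟨a, ha⟩ ⟨b, hb⟩,
      q.support.map Subtype.val = p.support ∧
      q.edges.map (Sym2.map Subtype.val) = p.edges := by
  intro a b p
  induction p with
  | nil =>
    intro ha hb
    exact ⟨Walk.nil, by simp, by simp⟩
  | @cons x y z h q ih =>
    intro ha hb
    obtain ⟨q', hs, he⟩ := ih h.2.2 hb
    have hadj : (G.induce t).Adj ⟨x, ha⟩ ⟨y, h.2.2⟩ := h.1
    refine ⟨Walk.cons hadj q', ?_, ?_⟩
    · simp only [Walk.support_cons, List.map_cons, hs]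
    · simp only [Walk.edges_cons, List.map_cons, he, Sym2.map_pair_eq]

lemma isFVS_iff_gr (G : SimpleGraph V) (S : Finset V) :
    IsFVS G S ↔ (Gr G ((↑S : Set V)ᶜ)).IsAcyclic := by
  constructor
  · intro hfvs v c hc
    cases c with
    | nil => exact hc.ne_nil rfl
    | @cons _ y _ h q =>
      have hv : v ∈ ((↑S : Set V)ᶜ) := h.2.1
      obtain ⟨q', hs, he⟩ := liftW (Walk.cons h q) hv hv
      have hcyc : q'.IsCycle := by
        rw [Walk.isCycle_def, Walk.isTrail_def]
        refine ⟨?_, ?_, ?_⟩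
        · have hnd := hc.edges_nodup
          rw [← he] at hnd
          exact hnd.of_map _
        · intro hnil
          have hlen := congrArg List.length hs
          rw [hnil] at hlen
          simp only [Walk.support_nil, List.map_cons, List.map_nil, List.length_cons,
            List.length_nil, Walk.support_cons] at hlen
          simp at hlen
        · have hnd := hc.2
          have hmt : ∀ (l : List ↥((↑S : Set V)ᶜ)),
              (List.map Subtype.val l).tail = l.tail.map Subtype.val := by
            intro l; cases l <;> rfl
          have htl : q'.support.tail.map Subtype.val = (Walk.cons h q).support.tail := by
            rw [← hs, hmt]
          rw [← htl] at hnd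
          exact hnd.of_map _
      exact hfvs q' hcyc
  · intro hgr v c hc
    let hom : G.induce ((↑S : Set V)ᶜ) →g Gr G ((↑S : Set V)ᶜ) :=
      ⟨Subtype.val, fun {x y} h => ⟨h, x.2, y.2⟩⟩
    have hinj : Function.Injective ⇑hom := fun a b hab => Subtype.ext hab
    have := hc.map (f := hom) hinj
    exact hgr (c.map hom) this

end IFVSAux

namespace IFVSAux

variable {V : Type*} {G : SimpleGraph V} {r : ℕ}

lemma star_bound [Fintype V] (hfree : HFree (starG r) G) (v : V) (U : Set V)
    (hU : U ⊆ G.neighborSet v) (hind : U.Pairwise fun a b => ¬G.Adj a b) :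
    U.ncard ≤ r - 1 := by
  classical
  by_contra hlt
  push_neg at hlt
  have hrU : r ≤ U.ncard := by omega
  have hUf : U.Finite := Set.toFinite U
  have hcard : r ≤ hUf.toFinset.card := by
    rwa [← Set.ncard_eq_toFinset_card U hUf]
  obtain ⟨T, hTsub, hTcard⟩ := Finset.exists_subset_card_eq hcard
  have hTU : ∀ x ∈ T, x ∈ U := fun x hx => (Set.Finite.mem_toFinset hUf).mp (hTsub hx)
  have ecard : Fintype.card ↥T = r := by rw [Fintype.card_coe]; exact hTcard
  let e : ↥T ≃ Fin r := Fintype.equivFinOfCardEq ecard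
  let f : Unit ⊕ Fin r → V := Sum.elim (fun _ => v) (fun i => ((e.symm i : ↥T) : V))
  have hmem : ∀ i : Fin r, ((e.symm i : ↥T) : V) ∈ U := fun i => hTU _ (e.symm i).2
  have hadjm : ∀ i : Fin r, G.Adj v ((e.symm i : ↥T) : V) := fun i => hU (hmem i)
  have hvne : ∀ i : Fin r, v ≠ ((e.symm i : ↥T) : V) := fun i => (hadjm i).ne
  have finj : Function.Injective f := by
    rintro (⟨⟩ | i) (⟨⟩ | j) h
    · rfl
    · exact absurd h (hvne j)
    · exact absurd h.symm (hvne i)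
    · simp only [f, Sum.elim_inr] at h
      have : e.symm i = e.symm j := Subtype.ext h
      rw [congrArg Sum.inr (e.symm.injective this)]
  have hstar : ∀ i : Fin r, (starG r).Adj (Sum.inl ()) (Sum.inr i) := by
    intro i
    rw [starG, fromRel_adj]
    exact ⟨by simp, Or.inl ⟨i, rfl, rfl⟩⟩
  have hstarn : ∀ i j : Fin r, ¬(starG r).Adj (Sum.inr i) (Sum.inr j) := by
    intro i j h
    rw [starG, fromRel_adj] at h
    rcases h.2 with ⟨_, h1, _⟩ | ⟨_, h1, _⟩ <;> exact absurd h1 (by simp)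
  have hiff : ∀ a b : Unit ⊕ Fin r, G.Adj (f a) (f b) ↔ (starG r).Adj a b := by
    rintro (⟨⟩ | i) (⟨⟩ | j)
    · exact iff_of_false (G.loopless.irrefl v) (SimpleGraph.irrefl _)
    · exact iff_of_true (hadjm j) (hstar j)
    · exact iff_of_true (hadjm i).symm (hstar i).symm
    · refine iff_of_false ?_ (hstarn i j)
      by_cases hij : i = j
      · subst hij; exact G.loopless.irrefl _
      · have hne : ((e.symm i : ↥T) : V) ≠ ((e.symm j : ↥T) : V) := by
          intro hh
          exact hij (e.symm.injective (Subtype.ext hh))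
        exact hind (hmem i) (hmem j) hne
  have emb : starG r ↪g G := ⟨⟨f, finj⟩, @fun a b => hiff a b⟩
  exact hfree.false emb

end IFVSAux

namespace IFVSAux

variable {V : Type*} {G : SimpleGraph V} {r : ℕ}

lemma no_triangle_of_acyclic {H : SimpleGraph V} (hac : H.IsAcyclic) {a b c : V}
    (hab : H.Adj a b) (hbc : H.Adj b c) (hca : H.Adj c a) : False := by
  have hpath : (Walk.cons hbc Walk.nil).IsPath := by
    rw [Walk.cons_isPath_iff]
    exact ⟨Walk.IsPath.nil, by simp [hbc.ne]⟩
  have hnm : a ∉ (Walk.cons hbc Walk.nil).support := by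
    simp only [Walk.support_cons, Walk.support_nil, List.mem_cons, List.mem_singleton]
    push_neg
    exact ⟨hab.ne, fun h => hca.ne h.symm, by simp⟩
  obtain ⟨cyc, hcyc⟩ := cycle_of_path hab hca hbc.ne (Walk.cons hbc Walk.nil) hpath hnm
  exact hac cyc hcyc

lemma tcount : ∀ (a : ℕ) (T : Finset V),
    (∀ x ∈ T, ∀ y ∈ T, ∀ z ∈ T, G.Adj x y → G.Adj y z → G.Adj z x → False) →
    (∀ U : Finset V, U ⊆ T → (↑U : Set V).Pairwise (fun p q => ¬G.Adj p q) → U.card ≤ a) →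
    2 * T.card ≤ a * (a + 3) := by
  intro a
  induction a with
  | zero =>
    intro T htri hU
    have hemp : T = ∅ := by
      rw [Finset.eq_empty_iff_forall_notMem]
      intro x hx
      have := hU {x} (Finset.singleton_subset_iff.mpr hx)
        (by rw [Finset.coe_singleton]; exact Set.pairwise_singleton _ _)
      simp at this
    rw [hemp]
    simp
  | succ a ih =>
    intro T htri hU
    classical
    rcases Finset.eq_empty_or_nonempty T with rfl | ⟨w, hw⟩
    · simp
    · set A := T.filter (fun x => G.Adj w x) with hA
      set T' := T.filter (fun x => x ≠ w ∧ ¬G.Adj w x) with hT'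
      have hAcard : A.card ≤ a + 1 := by
        apply hU A (Finset.filter_subset _ _)
        intro p hp q hq hne hadj
        have hp' : p ∈ A := hp
        have hq' : q ∈ A := hq
        rw [Finset.mem_filter] at hp' hq'
        exact htri w hw p hp'.1 q hq'.1 hp'.2 hadj hq'.2.symm
      have hT'b : ∀ U : Finset V, U ⊆ T' →
          (↑U : Set V).Pairwise (fun p q => ¬G.Adj p q) → U.card ≤ a := by
        intro U hUsub hUp
        have hwU : w ∉ U := by
          intro hmem
          have := hUsub hmem
          rw [hT', Finset.mem_filter] at this
          exact this.2.1 rfl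
        have hins : (↑(insert w U) : Set V).Pairwise (fun p q => ¬G.Adj p q) := by
          rw [Finset.coe_insert]
          rw [Set.pairwise_insert]
          refine ⟨hUp, ?_⟩
          intro b hb _
          have hbT' := hUsub (Finset.mem_coe.mp hb)
          rw [hT', Finset.mem_filter] at hbT'
          exact ⟨hbT'.2.2, fun h => hbT'.2.2 h.symm⟩
        have hsub2 : insert w U ⊆ T := by
          intro x hx
          rcases Finset.mem_insert.mp hx with rfl | hx'
          · exact hw
          · exact Finset.filter_subset _ _ (hUsub hx')
        have := hU (insert w U) hsub2 hins
        rw [Finset.card_insert_of_notMem hwU] at this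
        omega
      have htri' : ∀ x ∈ T', ∀ y ∈ T', ∀ z ∈ T', G.Adj x y → G.Adj y z → G.Adj z x → False := by
        intro x hx y hy z hz
        exact htri x (Finset.filter_subset _ _ hx) y (Finset.filter_subset _ _ hy)
          z (Finset.filter_subset _ _ hz)
      have hrec := ih T' htri' hT'b
      have hcov : T ⊆ insert w (A ∪ T') := by
        intro x hx
        rw [Finset.mem_insert, Finset.mem_union, hA, hT', Finset.mem_filter, Finset.mem_filter]
        by_cases hxw : x = w
        · exact Or.inl hxw
        · by_cases hadj : G.Adj w x
          · exact Or.inr (Or.inl ⟨hx, hadj⟩)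
          · exact Or.inr (Or.inr ⟨hx, hxw, hadj⟩)
      have hcard : T.card ≤ 1 + A.card + T'.card := by
        have h1 := Finset.card_le_card hcov
        have h2 := Finset.card_insert_le w (A ∪ T')
        have h3 := Finset.card_union_le A T'
        omega
      nlinarith [hrec, hAcard, hcard]

end IFVSAux

namespace IFVSAux

variable {V : Type*} [Fintype V] {G : SimpleGraph V} {r : ℕ}

lemma gr_compl_adj {I0 : Finset V} {a b : V} (h : G.Adj a b) (ha : a ∉ I0) (hb : b ∉ I0) :
    (Gr G ((↑I0 : Set V)ᶜ)).Adj a b := by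
  refine ⟨h, ?_, ?_⟩
  · simp only [Set.mem_compl_iff, Finset.mem_coe]; exact ha
  · simp only [Set.mem_compl_iff, Finset.mem_coe]; exact hb

lemma deg_bound (hr : 1 ≤ r) (hfree : HFree (starG r) G) (I0 : Finset V)
    (hIS : IsIS G ↑I0) (hIac : (Gr G ((↑I0 : Set V)ᶜ)).IsAcyclic) (v : V) :
    (G.neighborSet v).ncard - 1 ≤ 2 * r ^ 2 + 3 - 5 * r := by
  classical
  set NI : Set V := G.neighborSet v ∩ ↑I0 with hNIdef
  set NF : Set V := G.neighborSet v \ ↑I0 with hNFdef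
  have hsplit : NI.ncard + NF.ncard = (G.neighborSet v).ncard :=
    Set.ncard_inter_add_ncard_diff_eq_ncard _ _
  have hNI : NI.ncard ≤ r - 1 := by
    apply star_bound hfree v NI Set.inter_subset_left
    intro p hp q hq hne
    exact hIS hp.2 hq.2 hne
  have hNF : 2 * NF.ncard ≤ (r - 1) * ((r - 1) + 3) := by
    have hfin : NF.Finite := Set.toFinite _
    have htri : ∀ x ∈ hfin.toFinset, ∀ y ∈ hfin.toFinset, ∀ z ∈ hfin.toFinset,
        G.Adj x y → G.Adj y z → G.Adj z x → False := by
      intro x hx y hy z hz hxy hyz hzx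
      rw [Set.Finite.mem_toFinset] at hx hy hz
      exact no_triangle_of_acyclic hIac (gr_compl_adj hxy hx.2 hy.2)
        (gr_compl_adj hyz hy.2 hz.2) (gr_compl_adj hzx hz.2 hx.2)
    have hUb : ∀ U : Finset V, U ⊆ hfin.toFinset →
        (↑U : Set V).Pairwise (fun p q => ¬G.Adj p q) → U.card ≤ r - 1 := by
      intro U hUsub hUp
      have hsubN : (↑U : Set V) ⊆ G.neighborSet v := by
        intro x hx
        have := hUsub (Finset.mem_coe.mp hx)
        rw [Set.Finite.mem_toFinset] at this
        exact this.1
      have := star_bound hfree v ↑U hsubN hUp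
      rwa [Set.ncard_coe_finset] at this
    have := tcount (r - 1) hfin.toFinset htri hUb
    rwa [← Set.ncard_eq_toFinset_card NF hfin] at this
  by_cases hr2 : r = 2
  · subst hr2
    suffices hdeg : (G.neighborSet v).ncard ≤ 2 by omega
    by_contra hgt
    push_neg at hgt
    obtain ⟨x, hx, y, hy, z, hz, hxy, hxz, hyz⟩ :=
      (Set.two_lt_ncard (Set.toFinite _)).mp hgt
    have pair_adj : ∀ a b : V, a ∈ G.neighborSet v → b ∈ G.neighborSet v → a ≠ b →
        G.Adj a b := by
      intro a b ha hb hne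
      by_contra hnadj
      have hb2 : ({a, b} : Set V).ncard ≤ 2 - 1 := by
        apply star_bound hfree v {a, b}
        · intro p hp
          rcases hp with rfl | rfl
          · exact ha
          · exact hb
        · rw [Set.pairwise_insert]
          refine ⟨Set.pairwise_singleton _ _, ?_⟩
          rintro p rfl _
          exact ⟨hnadj, fun h => hnadj h.symm⟩
      rw [Set.ncard_pair hne] at hb2
      omega
    have haxy : G.Adj x y := pair_adj x y hx hy hxy
    have haxz : G.Adj x z := pair_adj x z hx hz hxz
    have hayz : G.Adj y z := pair_adj y z hy hz hyz
    have havx : G.Adj v x := hx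
    have havy : G.Adj v y := hy
    have havz : G.Adj v z := hz
    have hpairI : ∀ a b : V, G.Adj a b → a ∈ I0 → b ∈ I0 → False := by
      intro a b hab ha hb
      exact hIS (Finset.mem_coe.mpr ha) (Finset.mem_coe.mpr hb) hab.ne hab
    by_cases hvI : v ∈ I0
    · have hxI : x ∉ I0 := fun h => hpairI v x havx hvI h
      have hyI : y ∉ I0 := fun h => hpairI v y havy hvI h
      have hzI : z ∉ I0 := fun h => hpairI v z havz hvI h
      exact no_triangle_of_acyclic hIac (gr_compl_adj haxy hxI hyI)
        (gr_compl_adj hayz hyI hzI) (gr_compl_adj haxz.symm hzI hxI)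
    · by_cases hxI : x ∈ I0
      · have hyI : y ∉ I0 := fun h => hpairI x y haxy hxI h
        have hzI : z ∉ I0 := fun h => hpairI x z haxz hxI h
        exact no_triangle_of_acyclic hIac (gr_compl_adj havy hvI hyI)
          (gr_compl_adj hayz hyI hzI) (gr_compl_adj havz.symm hzI hvI)
      · by_cases hyI : y ∈ I0
        · have hzI : z ∉ I0 := fun h => hpairI y z hayz hyI h
          exact no_triangle_of_acyclic hIac (gr_compl_adj havx hvI hxI)
            (gr_compl_adj haxz hxI hzI) (gr_compl_adj havz.symm hzI hvI)
        · exact no_triangle_of_acyclic hIac (gr_compl_adj havx hvI hxI)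
            (gr_compl_adj haxy hxI hyI) (gr_compl_adj havy.symm hyI hvI)
  · by_cases hr1 : r = 1
    · subst hr1
      simp only [Nat.sub_self] at hNI
      have hpow : 2 * 1 ^ 2 + 3 - 5 * 1 = 0 := by norm_num
      rw [hpow]
      norm_num at hNF
      omega
    · -- r ≥ 3
      obtain ⟨k, rfl⟩ : ∃ k, r = k + 3 := ⟨r - 3, by omega⟩
      have h1 : k + 3 - 1 = k + 2 := by omega
      rw [h1] at hNI hNF
      have h2 : (k + 2) * (k + 2 + 3) = k ^ 2 + 7 * k + 10 := by ring
      rw [h2] at hNF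
      have h3 : 2 * (k + 3) ^ 2 + 3 - 5 * (k + 3) = 2 * k ^ 2 + 7 * k + 6 := by
        have : (k + 3) ^ 2 = k ^ 2 + 6 * k + 9 := by ring
        omega
      rw [h3]
      omega

end IFVSAux

open IFVSAux

theorem stmt_12 {V : Type*} [Fintype V] (G : SimpleGraph V) (r : ℕ) (hr : 1 ≤ r)
    (hnb : NearBip G) (hfree : HFree (starG r) G) :
    ifvs G ≤ (2 * r ^ 2 + 3 - 5 * r) * fvs G := by
  classical
  obtain ⟨I0, hI0fvs, hI0is⟩ := hnb
  have hIac : (Gr G ((↑I0 : Set V)ᶜ)).IsAcyclic := (isFVS_iff_gr G I0).mp hI0fvs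
  have hfvsne : {n | ∃ S : Finset V, IsFVS G S ∧ S.card = n}.Nonempty :=
    ⟨I0.card, I0, hI0fvs, rfl⟩
  have hmem : ∃ S : Finset V, IsFVS G S ∧ S.card = fvs G := Nat.sInf_mem hfvsne
  obtain ⟨Smin, hSmin, hScard⟩ := hmem
  have hudiff : ∀ (T : Finset V), ((↑(Finset.univ : Finset V) : Set V) \ ↑T) = (↑T : Set V)ᶜ := by
    intro T
    ext a
    simp
  have hacA : (Gr G ((↑(Finset.univ : Finset V) : Set V) \ ↑I0)).IsAcyclic := by
    rw [hudiff]; exact hIac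
  obtain ⟨W, hWsub, hWac, hWbound⟩ :=
    lemA (Finset.univ.card) Finset.univ I0 rfl (Finset.subset_univ I0) hI0is hacA
  have hWis : IsIS G ↑W := hI0is.mono (Finset.coe_subset.mpr hWsub)
  have hWfvs : IsFVS G W := by
    rw [isFVS_iff_gr]
    rw [← hudiff W]
    exact hWac
  have hifvs_le : ifvs G ≤ W.card := Nat.sInf_le ⟨W, hWfvs, hWis, rfl⟩
  have hacB : (Gr G ((↑(Finset.univ : Finset V) : Set V) \ ↑Smin)).IsAcyclic := by
    rw [hudiff]; exact (isFVS_iff_gr G Smin).mp hSmin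
  have hB := lemB Smin.card Smin Finset.univ rfl (Finset.subset_univ Smin) hacB
  have hsum : ∑ v ∈ Smin, ((G.neighborSet v).ncard - 1) ≤
      (2 * r ^ 2 + 3 - 5 * r) * Smin.card := by
    calc ∑ v ∈ Smin, ((G.neighborSet v).ncard - 1)
        ≤ ∑ _v ∈ Smin, (2 * r ^ 2 + 3 - 5 * r) :=
          Finset.sum_le_sum fun v _ => deg_bound hr hfree I0 hI0is hIac v
      _ = (2 * r ^ 2 + 3 - 5 * r) * Smin.card := by
          rw [Finset.sum_const, smul_eq_mul, mul_comm]
  rw [← hScard]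
  exact le_trans hifvs_le (by omega)
end

section
/- If G is a near-bipartite graph with no independent set of size s (s ≥ 4), then ifvs(G) ≤ fvs(G) + s − 3. -/
open SimpleGraph

/-!
An independent feedback vertex set has fewer than `s` vertices, so `ifvs G ≤ s - 1`, which is
enough once `fvs G ≥ 2`. If `fvs G ≤ 1`, a minimum feedback vertex set has at most one vertex and
is therefore itself independent, so `ifvs G = fvs G`.
-/

section FeedbackVertexSets

variable {V : Type*} {G : SimpleGraph V}

lemma isIS_of_card_le_one {S : Finset V} (hS : S.card ≤ 1) : IsIS G ↑S :=
  fun u hu v hv huv => absurd (Finset.card_le_one.mp hS u hu v hv) huv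

lemma ifvs_le_card {S : Finset V} (hS : IsFVS G S) (hSi : IsIS G ↑S) : ifvs G ≤ S.card :=
  Nat.sInf_le ⟨S, hS, hSi, rfl⟩

lemma exists_isFVS_card_eq_fvs {S : Finset V} (hS : IsFVS G S) :
    ∃ T : Finset V, IsFVS G T ∧ T.card = fvs G :=
  Nat.sInf_mem (s := {n | ∃ T : Finset V, IsFVS G T ∧ T.card = n}) ⟨S.card, S, hS, rfl⟩

lemma ifvs_le_fvs_of_fvs_le_one {S : Finset V} (hS : IsFVS G S) (h : fvs G ≤ 1) :
    ifvs G ≤ fvs G := by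
  obtain ⟨T, hT, hTcard⟩ := exists_isFVS_card_eq_fvs hS
  rw [← hTcard] at h ⊢
  exact ifvs_le_card hT (isIS_of_card_le_one h)

lemma NearBip.ifvs_lt {s : ℕ} (hnb : NearBip G)
    (hfree : ∀ S : Finset V, IsIS G ↑S → S.card < s) : ifvs G < s := by
  obtain ⟨S, hS, hSi⟩ := hnb
  exact (ifvs_le_card hS hSi).trans_lt (hfree S hSi)

end FeedbackVertexSets

theorem stmt_13_general {V : Type*} (G : SimpleGraph V) (s : ℕ)
    (hnb : NearBip G) (hfree : ∀ S : Finset V, IsIS G ↑S → S.card < s) :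
    ifvs G ≤ fvs G + (s - 3) := by
  have hlt : ifvs G < s := hnb.ifvs_lt hfree
  obtain ⟨S, hS, -⟩ := hnb
  rcases le_or_gt (fvs G) 1 with hsmall | hlarge
  · exact (ifvs_le_fvs_of_fvs_le_one hS hsmall).trans (Nat.le_add_right _ _)
  · omega

theorem stmt_13 {V : Type*} [Fintype V] (G : SimpleGraph V) (s : ℕ) (hs : 4 ≤ s)
    (hnb : NearBip G) (hfree : ∀ S : Finset V, IsIS G ↑S → S.card < s) :
    ifvs G ≤ fvs G + (s - 3) :=
  stmt_13_general G s hnb hfree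
end

section
/- If G is a 3-colourable graph with no induced path on 4 vertices (P_4-free), then the minimum size of an independent odd cycle transversal of G equals the minimum size of an odd cycle transversal of G. -/
open SimpleGraph

/-- `S` is an odd cycle transversal of `G`: removing it leaves a bipartite graph. -/
def IsOCT {V : Type*} (G : SimpleGraph V) (S : Finset V) : Prop :=
  (G.induce ((S : Set V)ᶜ)).Colorable 2

/-- minimum size of an odd cycle transversal. -/
noncomputable def oct {V : Type*} (G : SimpleGraph V) : ℕ :=
  sInf {n | ∃ S : Finset V, IsOCT G S ∧ S.card = n}

/-- minimum size of an independent odd cycle transversal. -/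
noncomputable def ioct {V : Type*} (G : SimpleGraph V) : ℕ :=
  sInf {n | ∃ S : Finset V, IsOCT G S ∧ IsIS G ↑S ∧ S.card = n}

/-!
P₄-free graphs are cographs: a vertex set with at least two vertices splits into two nonempty
parts with either no edges or all edges between them. Over this decomposition we induct a
statement for every number `k` of colours: if `s` is `(k + 1)`-colourable and `s \ S` is
`k`-colourable, some independent `T ⊆ s` with `|T| ≤ |S|` also leaves a `k`-colourable set.
For a disjoint union, combine the sets found in the two parts. In a join `B + C` the colour
counts of the sides add up, so removing `S` lowers the count on one side, say `B`; recursing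
into `B` and keeping `C` whole gives `T`. The case `k = 2` is `ioct = oct`.
-/

open Finset

namespace SimpleGraph

variable {V : Type*} {G : SimpleGraph V}

def InducedP4Free (G : SimpleGraph V) : Prop :=
  ∀ ⦃a b c d : V⦄, G.Adj a b → G.Adj b c → G.Adj c d →
    ¬G.Adj a c → ¬G.Adj b d → ¬G.Adj a d → False

lemma pathGraph_four_eq_of_forall_adj_iff :
    ∀ i j : Fin 4, (∀ k, (pathGraph 4).Adj i k ↔ (pathGraph 4).Adj j k) → i = j := by
  simp only [pathGraph_adj]
  decide

lemma inducedP4Free_of_hFree (h : HFree (pathGraph 4) G) : InducedP4Free G := by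
  intro a b c d hab hbc hcd hac hbd had
  have hv : ∀ i j : Fin 4,
      G.Adj (![a, b, c, d] i) (![a, b, c, d] j) ↔ (pathGraph 4).Adj i j := by
    intro i j
    fin_cases i <;> fin_cases j <;>
      simp [pathGraph_adj, hab, hbc, hcd, hac, hbd, had, hab.symm, hbc.symm, hcd.symm, G.adj_comm]
  exact h.false ⟨⟨![a, b, c, d], fun i j hij =>
    pathGraph_four_eq_of_forall_adj_iff i j fun k => by rw [← hv, ← hv, hij]⟩, hv _ _⟩

lemma InducedP4Free.compl (hG : InducedP4Free G) : InducedP4Free Gᶜ := by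
  intro a b c d hab hbc hcd hac hbd had
  have adj_of_not {x y : V} (hxy : x ≠ y) (h : ¬Gᶜ.Adj x y) : G.Adj x y := by
    simpa [compl_adj, hxy] using h
  have hac' := adj_of_not (by rintro rfl; exact had hcd) hac
  have had' := adj_of_not (by rintro rfl; exact hac hcd.symm) had
  have hbd' := adj_of_not (by rintro rfl; exact had hab) hbd
  rw [compl_adj] at hab hbc hcd
  exact hG hac'.symm had' hbd'.symm hcd.2 hab.2 fun h => hbc.2 h.symm

section Separation

variable [DecidableEq V] {s t B : Finset V} {v : V}

def IsSeparation (G : SimpleGraph V) (s B : Finset V) : Prop :=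
  B ⊆ s ∧ B.Nonempty ∧ (s \ B).Nonempty ∧ ∀ x ∈ B, ∀ y ∈ s \ B, ¬G.Adj x y

lemma IsSeparation.sdiff (h : IsSeparation G s B) : IsSeparation G s (s \ B) := by
  obtain ⟨hBs, hB, hC, hno⟩ := h
  rw [IsSeparation, Finset.sdiff_sdiff_eq_self hBs]
  exact ⟨sdiff_subset, hC, hB, fun x hx y hy hxy => hno y hy x hx hxy.symm⟩

lemma IsSeparation.ssubset (h : IsSeparation G s B) : B ⊂ s :=
  h.1.ssubset_of_not_subset (sdiff_nonempty.1 h.2.2.1)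

lemma IsSeparation.adj_of_compl (h : IsSeparation Gᶜ s B) {x y : V} (hx : x ∈ B)
    (hy : y ∈ s \ B) : G.Adj x y := by
  have hxy : x ≠ y := fun hxy => (mem_sdiff.1 hy).2 (hxy ▸ hx)
  simpa [compl_adj, hxy] using h.2.2.2 x hx y hy

lemma isSeparation_insert_singleton (hv : v ∉ t) (ht : t.Nonempty)
    (hno : ∀ y ∈ t, ¬G.Adj v y) : IsSeparation G (insert v t) {v} := by
  rw [IsSeparation, sdiff_singleton_eq_erase, erase_insert hv]
  exact ⟨singleton_subset_iff.2 (mem_insert_self v t), singleton_nonempty v, ht,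
    fun x hx => mem_singleton.1 hx ▸ hno⟩

/-- An edge from `x ∈ B` with `¬G.Adj v x` to a neighbour `y ∈ B` of `v` would give the induced
path `x - y - v - c`. -/
lemma InducedP4Free.isSeparation_insert_filter [DecidableRel G.Adj] (hG : InducedP4Free G)
    (h : IsSeparation G t B) (hv : v ∉ t) (hX : (B.filter (¬G.Adj v ·)).Nonempty)
    (hc : (∃ c ∈ t \ B, G.Adj v c) ∨ ∀ y ∈ B, ¬G.Adj v y) :
    IsSeparation G (insert v t) (B.filter (¬G.Adj v ·)) := by
  have hXt : B.filter (¬G.Adj v ·) ⊆ t := (filter_subset _ _).trans h.1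
  refine ⟨hXt.trans (subset_insert v t), hX,
    ⟨v, mem_sdiff.2 ⟨mem_insert_self v t, fun hvX => hv (hXt hvX)⟩⟩, fun x hx y hy hxy => ?_⟩
  obtain ⟨hxB, hvx⟩ := mem_filter.1 hx
  obtain ⟨hy, hyX⟩ := mem_sdiff.1 hy
  rcases mem_insert.1 hy with rfl | hyt
  · exact hvx hxy.symm
  by_cases hyB : y ∈ B
  · have hvy : G.Adj v y := by_contra fun hvy => hyX (mem_filter.2 ⟨hyB, hvy⟩)
    rcases hc with ⟨c, hcC, hvc⟩ | hno
    · exact hG hxy hvy.symm hvc (fun h => hvx h.symm) (h.2.2.2 y hyB c hcC)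
        (h.2.2.2 x hxB c hcC)
    · exact hno y hyB hvy
  · exact h.2.2.2 x hxB y (mem_sdiff.2 ⟨hyt, hyB⟩) hxy

lemma InducedP4Free.exists_isSeparation_insert (hG : InducedP4Free G)
    (h : IsSeparation G t B) (hv : v ∉ t) :
    ∃ X, IsSeparation G (insert v t) X ∨ IsSeparation Gᶜ (insert v t) X := by
  classical
  have h' : IsSeparation G t (t \ B) := h.sdiff
  by_cases hb : ∃ b ∈ B, G.Adj v b
  · by_cases hc : ∃ c ∈ t \ B, G.Adj v c
    · by_cases hXB : (B.filter (¬G.Adj v ·)).Nonempty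
      · exact ⟨_, Or.inl (hG.isSeparation_insert_filter h hv hXB (Or.inl hc))⟩
      by_cases hXC : ((t \ B).filter (¬G.Adj v ·)).Nonempty
      · exact ⟨_, Or.inl (hG.isSeparation_insert_filter h' hv hXC
          (Or.inl (by rwa [Finset.sdiff_sdiff_eq_self h.1])))⟩
      refine ⟨{v}, Or.inr (isSeparation_insert_singleton hv (h.2.1.mono h.1) fun y hy => ?_)⟩
      have hvy : G.Adj v y := by
        by_contra hvy
        by_cases hyB : y ∈ B
        · exact hXB ⟨y, mem_filter.2 ⟨hyB, hvy⟩⟩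
        · exact hXC ⟨y, mem_filter.2 ⟨mem_sdiff.2 ⟨hy, hyB⟩, hvy⟩⟩
      simp [compl_adj, hvy]
    · push Not at hc
      refine ⟨_, Or.inl (hG.isSeparation_insert_filter h' hv ?_ (Or.inr hc))⟩
      rw [filter_true_of_mem hc]
      exact h.2.2.1
  · push Not at hb
    refine ⟨_, Or.inl (hG.isSeparation_insert_filter h hv ?_ (Or.inr hb))⟩
    rw [filter_true_of_mem hb]
    exact h.2.1

theorem InducedP4Free.exists_isSeparation (hG : InducedP4Free G) (s : Finset V) (hs : 1 < #s) :
    ∃ B, IsSeparation G s B ∨ IsSeparation Gᶜ s B := by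
  induction s using Finset.induction_on with
  | empty => simp at hs
  | insert v t hv ih =>
    rw [card_insert_of_notMem hv] at hs
    obtain ht | ht := (by omega : #t = 1 ∨ 1 < #t)
    · obtain ⟨u, rfl⟩ := card_eq_one.1 ht
      by_cases hvu : G.Adj v u
      · exact ⟨{v}, Or.inr (isSeparation_insert_singleton hv (singleton_nonempty u)
          (by simp [compl_adj, hvu]))⟩
      · exact ⟨{v}, Or.inl (isSeparation_insert_singleton hv (singleton_nonempty u)
          (by simpa using hvu))⟩
    · obtain ⟨B, hB | hB⟩ := ih ht
      · exact hG.exists_isSeparation_insert hB hv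
      · obtain ⟨X, hX⟩ := hG.compl.exists_isSeparation_insert hB hv
        exact ⟨X, by rwa [compl_compl, or_comm] at hX⟩

end Separation

section Colouring

variable {s B C : Finset V} {a b k : ℕ}

def ColorableOn (G : SimpleGraph V) (s : Finset V) (k : ℕ) : Prop :=
  ∃ f : V → ℕ, (∀ v ∈ s, f v < k) ∧ ∀ u ∈ s, ∀ v ∈ s, G.Adj u v → f u ≠ f v

lemma ColorableOn.mono {t : Finset V} {l : ℕ} (h : ColorableOn G s k) (hts : t ⊆ s)
    (hkl : k ≤ l) : ColorableOn G t l := by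
  obtain ⟨f, hfk, hf⟩ := h
  exact ⟨f, fun v hv => (hfk v (hts hv)).trans_le hkl,
    fun u hu v hv => hf u (hts hu) v (hts hv)⟩

lemma Colorable.colorableOn (h : G.Colorable k) (s : Finset V) : ColorableOn G s k := by
  obtain ⟨c⟩ := h
  exact ⟨fun v => c v, fun v _ => (c v).isLt, fun u _ v _ huv => Fin.val_ne_of_ne (c.valid huv)⟩

lemma colorable_induce_iff_colorableOn (s : Finset V) :
    (G.induce ↑s).Colorable k ↔ ColorableOn G s k := by
  classical
  constructor
  · rintro ⟨c⟩
    refine ⟨fun v => if hv : v ∈ s then c ⟨v, hv⟩ else 0, fun v hv => ?_, fun u hu v hv huv => ?_⟩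
    · simp [hv]
    · simpa [hu, hv, Fin.val_inj] using c.valid (show (G.induce ↑s).Adj ⟨u, hu⟩ ⟨v, hv⟩ from huv)
  · rintro ⟨f, hfk, hf⟩
    exact ⟨Coloring.mk (fun v => ⟨f v, hfk v v.2⟩) fun {v w} huv =>
      Fin.ne_of_val_ne (hf _ v.2 _ w.2 huv)⟩

lemma colorableOn_card_image {α : Type*} [DecidableEq α] (f : V → α)
    (hf : ∀ u ∈ s, ∀ v ∈ s, G.Adj u v → f u ≠ f v) : ColorableOn G s #(s.image f) := by
  let e := (s.image f).equivFin
  refine ⟨fun v => if h : f v ∈ s.image f then e ⟨f v, h⟩ else 0, fun v hv => ?_,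
    fun u hu v hv huv => ?_⟩
  · simp [mem_image_of_mem f hv]
  · simp only [mem_image_of_mem f hu, mem_image_of_mem f hv, dif_pos, ne_eq, Fin.val_inj,
      e.apply_eq_iff_eq, Subtype.mk.injEq]
    exact hf u hu v hv huv

lemma card_image_add_card_image_le {α : Type*} [DecidableEq α] (f : α → ℕ) {B C : Finset α}
    (hf : ∀ x ∈ B, ∀ y ∈ C, f x ≠ f y) (hk : ∀ x ∈ B ∪ C, f x < k) :
    #(B.image f) + #(C.image f) ≤ k := by
  have hdisj : Disjoint (B.image f) (C.image f) := by
    refine Finset.disjoint_left.2 fun c hcB hcC => ?_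
    obtain ⟨x, hx, rfl⟩ := mem_image.1 hcB
    obtain ⟨y, hy, hyx⟩ := mem_image.1 hcC
    exact hf x hx y hy hyx.symm
  rw [← card_union_of_disjoint hdisj, ← image_union]
  calc #((B ∪ C).image f) ≤ #(range k) :=
        card_le_card fun c hc => by
          obtain ⟨x, hx, rfl⟩ := mem_image.1 hc
          exact mem_range.2 (hk x hx)
    _ = k := card_range k

variable [DecidableEq V]

lemma colorableOn_union_of_forall_not_adj (hB : ColorableOn G B k) (hC : ColorableOn G C k)
    (hBC : ∀ x ∈ B, ∀ y ∈ C, ¬G.Adj x y) : ColorableOn G (B ∪ C) k := by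
  obtain ⟨f, hfk, hf⟩ := hB
  obtain ⟨g, hgk, hg⟩ := hC
  refine ⟨fun v => if v ∈ B then f v else g v, fun v hv => ?_, fun u hu v hv huv => ?_⟩
  · by_cases hvB : v ∈ B
    · simpa [hvB] using hfk v hvB
    · simpa [hvB] using hgk v ((mem_union.1 hv).resolve_left hvB)
  · by_cases huB : u ∈ B <;> by_cases hvB : v ∈ B <;> simp only [huB, hvB, if_true, if_false]
    · exact hf u huB v hvB huv
    · exact (hBC u huB v ((mem_union.1 hv).resolve_left hvB) huv).elim
    · exact (hBC v hvB u ((mem_union.1 hu).resolve_left huB) huv.symm).elim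
    · exact hg u ((mem_union.1 hu).resolve_left huB) v ((mem_union.1 hv).resolve_left hvB) huv

lemma colorableOn_union_add (hB : ColorableOn G B a) (hC : ColorableOn G C b) :
    ColorableOn G (B ∪ C) (a + b) := by
  obtain ⟨f, hfk, hf⟩ := hB
  obtain ⟨g, hgk, hg⟩ := hC
  refine ⟨fun v => if v ∈ B then f v else a + g v, fun v hv => ?_, fun u hu v hv huv => ?_⟩
  · by_cases hvB : v ∈ B
    · simpa [hvB] using (hfk v hvB).trans_le (Nat.le_add_right a b)
    · simpa [hvB] using hgk v ((mem_union.1 hv).resolve_left hvB)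
  · by_cases huB : u ∈ B <;> by_cases hvB : v ∈ B <;> simp only [huB, hvB, if_true, if_false]
    · exact hf u huB v hvB huv
    · have := hfk u huB; omega
    · have := hfk v hvB; omega
    · have := hg u ((mem_union.1 hu).resolve_left huB) v ((mem_union.1 hv).resolve_left hvB) huv
      omega

end Colouring

section Transversal

variable [DecidableEq V] {s B C : Finset V}

def HasIndependentTransversals (G : SimpleGraph V) (s : Finset V) : Prop :=
  ∀ (k : ℕ) (S : Finset V), ColorableOn G s (k + 1) → ColorableOn G (s \ S) k →
    ∃ T ⊆ s, IsIS G ↑T ∧ ColorableOn G (s \ T) k ∧ #T ≤ #S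

lemma hasIndependentTransversals_of_forall_not_adj (h : ∀ u ∈ s, ∀ v ∈ s, ¬G.Adj u v) :
    HasIndependentTransversals G s := fun _ S _ hS =>
  ⟨s ∩ S, inter_subset_left, fun u hu v hv _ => h u (mem_inter.1 hu).1 v (mem_inter.1 hv).1,
    by rwa [sdiff_inter_self_left], card_le_card inter_subset_right⟩

lemma HasIndependentTransversals.union_of_forall_not_adj (hB : HasIndependentTransversals G B)
    (hC : HasIndependentTransversals G C) (hdisj : Disjoint B C)
    (hBC : ∀ x ∈ B, ∀ y ∈ C, ¬G.Adj x y) : HasIndependentTransversals G (B ∪ C) := by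
  intro k S hs hS
  have restrict {D : Finset V} (hD : D ⊆ B ∪ C) :
      ColorableOn G D (k + 1) ∧ ColorableOn G (D \ (D ∩ S)) k := by
    rw [sdiff_inter_self_left]
    exact ⟨hs.mono hD le_rfl, hS.mono (sdiff_subset_sdiff hD subset_rfl) le_rfl⟩
  obtain ⟨TB, hTB, hTBi, hTBc, hTBS⟩ := hB k _ (restrict subset_union_left).1
    (restrict subset_union_left).2
  obtain ⟨TC, hTC, hTCi, hTCc, hTCS⟩ := hC k _ (restrict subset_union_right).1
    (restrict subset_union_right).2
  refine ⟨TB ∪ TC, union_subset_union hTB hTC, ?_, ?_, ?_⟩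
  · rw [IsIS, coe_union, Set.pairwise_union]
    exact ⟨hTBi, hTCi, fun x hx y hy _ =>
      ⟨hBC x (hTB hx) y (hTC hy), fun h => hBC x (hTB hx) y (hTC hy) h.symm⟩⟩
  · refine (colorableOn_union_of_forall_not_adj hTBc hTCc fun x hx y hy =>
      hBC x (mem_sdiff.1 hx).1 y (mem_sdiff.1 hy).1).mono (fun x hx => ?_) le_rfl
    simp only [mem_sdiff, mem_union] at hx ⊢
    tauto
  · calc #(TB ∪ TC) ≤ #TB + #TC := card_union_le _ _
      _ ≤ #(B ∩ S) + #(C ∩ S) := add_le_add hTBS hTCS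
      _ = #((B ∪ C) ∩ S) := by
        rw [union_inter_distrib_right,
          card_union_of_disjoint (hdisj.mono inter_subset_left inter_subset_left)]
      _ ≤ #S := card_le_card inter_subset_right

lemma HasIndependentTransversals.exists_of_colorableOn_sdiff {S : Finset V} {a b k : ℕ}
    (hB : HasIndependentTransversals G B) (hBa : ColorableOn G B (a + 1))
    (hBS : ColorableOn G (B \ S) a) (hC : ColorableOn G C b) (hk : a + b ≤ k) :
    ∃ T ⊆ B ∪ C, IsIS G ↑T ∧ ColorableOn G ((B ∪ C) \ T) k ∧ #T ≤ #S := by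
  obtain ⟨T, hTB, hTi, hTc, hTS⟩ := hB a S hBa hBS
  refine ⟨T, hTB.trans subset_union_left, hTi,
    (colorableOn_union_add hTc hC).mono (fun x hx => ?_) hk, hTS⟩
  simp only [mem_sdiff, mem_union] at hx ⊢
  tauto

lemma HasIndependentTransversals.union_of_forall_adj (hB : HasIndependentTransversals G B)
    (hC : HasIndependentTransversals G C) (hBC : ∀ x ∈ B, ∀ y ∈ C, G.Adj x y) :
    HasIndependentTransversals G (B ∪ C) := by
  intro k S ⟨f, hfk, hf⟩ ⟨g, hgk, hg⟩
  have hfB := colorableOn_card_image (G := G) f fun u hu v hv =>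
    hf u (mem_union_left C hu) v (mem_union_left C hv)
  have hfC := colorableOn_card_image (G := G) f fun u hu v hv =>
    hf u (mem_union_right B hu) v (mem_union_right B hv)
  have hgB := colorableOn_card_image (G := G) (s := B \ S) g fun u hu v hv =>
    hg u (sdiff_subset_sdiff subset_union_left subset_rfl hu)
      v (sdiff_subset_sdiff subset_union_left subset_rfl hv)
  have hgC := colorableOn_card_image (G := G) (s := C \ S) g fun u hu v hv =>
    hg u (sdiff_subset_sdiff subset_union_right subset_rfl hu)
      v (sdiff_subset_sdiff subset_union_right subset_rfl hv)
  have hf_le := card_image_add_card_image_le f (fun x hx y hy =>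
    hf x (mem_union_left C hx) y (mem_union_right B hy) (hBC x hx y hy)) hfk
  have hg_le := card_image_add_card_image_le (B := B \ S) (C := C \ S) g (fun x hx y hy =>
    hg x (sdiff_subset_sdiff subset_union_left subset_rfl hx)
      y (sdiff_subset_sdiff subset_union_right subset_rfl hy)
      (hBC x (mem_sdiff.1 hx).1 y (mem_sdiff.1 hy).1))
    fun x hx => hgk x (by simp only [mem_sdiff, mem_union] at hx ⊢; tauto)
  by_cases hBlt : #((B \ S).image g) < #(B.image f)
  · exact hB.exists_of_colorableOn_sdiff (a := #(B.image f) - 1) (hfB.mono subset_rfl (by omega))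
      (hgB.mono subset_rfl (by omega)) hfC (by omega)
  by_cases hClt : #((C \ S).image g) < #(C.image f)
  · rw [union_comm]
    exact hC.exists_of_colorableOn_sdiff (a := #(C.image f) - 1) (hfC.mono subset_rfl (by omega))
      (hgC.mono subset_rfl (by omega)) hfB (by omega)
  exact ⟨∅, empty_subset _, by simp [IsIS], (colorableOn_union_add hfB hfC).mono
    sdiff_subset (by omega), by simp⟩

theorem InducedP4Free.hasIndependentTransversals (hG : InducedP4Free G) (s : Finset V) :
    HasIndependentTransversals G s := by
  induction s using Finset.strongInduction with
  | H s ih =>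
  by_cases hs : 1 < #s
  · obtain ⟨B, hB | hB⟩ := hG.exists_isSeparation s hs <;> rw [← union_sdiff_of_subset hB.1]
    · exact (ih B hB.ssubset).union_of_forall_not_adj (ih _ hB.sdiff.ssubset) disjoint_sdiff
        hB.2.2.2
    · exact (ih B hB.ssubset).union_of_forall_adj (ih _ hB.sdiff.ssubset) fun _ hx _ hy =>
        hB.adj_of_compl hx hy
  · exact hasIndependentTransversals_of_forall_not_adj fun u hu v hv huv =>
      hs (one_lt_card.2 ⟨u, hu, v, hv, huv.ne⟩)

end Transversal

section Fintype

variable [Fintype V]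

lemma isOCT_iff_colorableOn [DecidableEq V] (S : Finset V) : IsOCT G S ↔ ColorableOn G Sᶜ 2 := by
  rw [IsOCT, ← coe_compl, colorable_induce_iff_colorableOn]

lemma ioct_eq_oct_of_exchange
    (h : ∀ S, IsOCT G S → ∃ T, IsOCT G T ∧ IsIS G ↑T ∧ #T ≤ #S) : ioct G = oct G := by
  classical
  have huniv : IsOCT G univ := by
    rw [isOCT_iff_colorableOn, compl_univ]
    exact ⟨fun _ => 0, by simp, by simp⟩
  unfold ioct oct
  obtain ⟨S, hS, hSn⟩ := Nat.sInf_mem (⟨_, univ, huniv, rfl⟩ :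
    {n | ∃ S : Finset V, IsOCT G S ∧ #S = n}.Nonempty)
  obtain ⟨T, hT, hTi, hTS⟩ := h S hS
  apply le_antisymm
  · rw [← hSn]
    exact le_trans (Nat.sInf_le ⟨T, hT, hTi, rfl⟩) hTS
  · obtain ⟨T', hT', -, hT'n⟩ := Nat.sInf_mem (⟨_, T, hT, hTi, rfl⟩ :
      {n | ∃ S : Finset V, IsOCT G S ∧ IsIS G ↑S ∧ #S = n}.Nonempty)
    rw [← hT'n]
    exact Nat.sInf_le ⟨T', hT', rfl⟩

end Fintype

end SimpleGraph

theorem stmt_14 {V : Type*} [Fintype V] (G : SimpleGraph V)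
    (hcol : G.Colorable 3) (hfree : HFree (pathGraph 4) G) :
    ioct G = oct G := by
  classical
  refine ioct_eq_oct_of_exchange fun S hS => ?_
  rw [isOCT_iff_colorableOn, compl_eq_univ_sdiff] at hS
  obtain ⟨T, -, hT, hTc, hTS⟩ := (inducedP4Free_of_hFree hfree).hasIndependentTransversals univ
    2 S (hcol.colorableOn univ) hS
  exact ⟨T, by rwa [isOCT_iff_colorableOn, compl_eq_univ_sdiff], hT, hTS⟩
end
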